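/- arXiv:1002.0832 — 6 statements merged into one kernel-verified Lean document; each statement's English description precedes it below -/
import Mathlib

section
/- Suppose μ is supported on the unit ball of H, (e_k)_{k=1}^K is the canonical orthonormal basis of ℝ^K, c ≥ 1, and 𝒯 is the class of all bounded linear maps T : ℝ^K → H with ‖T e_k‖ ≤ c for 1 ≤ k ≤ K. Let Y be a nonempty closed subset of the unit ball of ℝ^K and F_Y = { x ↦ inf_{y ∈ Y} ‖x − T y‖² : T ∈ 𝒯 }. Then R_m(F_Y, μ) ≤ 6 c² K² √(π/m). -/
/-!
For fixed `T`, `‖x - T y‖² = ‖x‖² + ⟨ψ y, φ x T⟩`, where the features `φ x T` are the numbers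
`2⟪x, T eₖ⟫` and the Gram entries `⟪T eⱼ, T eₖ⟫`, and `‖ψ y‖² ≤ 2` on the unit ball. Hence the
loss `inf_y ‖x - T y‖²` is `√2`-Lipschitz in `φ x T`. A lower Khintchine inequality
`‖d‖ ≤ √C · E|∑ τⱼ dⱼ|` turns this into the hypothesis of Maurer's vector contraction inequality,
which bounds the Rademacher average of the losses by that of `T ↦ ∑ᵢ ∑ⱼ τᵢⱼ φ (xᵢ) T j`. The
latter is linear in the features and is controlled by `E‖∑ᵢ τᵢ xᵢ‖ ≤ √m` and `E|∑ᵢ τᵢ| ≤ √m`.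
The fourth-moment Khintchine constant `C = 3` suffices unless `K = 1`, where there are only two
features and `C = 2`.
-/

open MeasureTheory

/-- The Rademacher complexity `R_m(F, μ) = (2/m) E_{x∼μ^m} E_σ sup_{f ∈ F} Σ_i σ_i f(x_i)`,
where the expectation over the i.i.d. uniform signs `σ` is written as a normalized sum over
all sign patterns `ε : Fin m → Bool`. -/
noncomputable def rademacher {X : Type*} [MeasurableSpace X] (m : ℕ)
    (F : Set (X → ℝ)) (μ : Measure X) : ℝ :=
  (2 / m) * ∫ x : Fin m → X,
    (∑ ε : Fin m → Bool,
        sSup ((fun f : X → ℝ => ∑ i, (if ε i then (1 : ℝ) else -1) * f (x i)) '' F)) / 2 ^ m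
    ∂(Measure.pi fun _ => μ)

open Finset Function
open scoped BigOperators Real RealInnerProductSpace

noncomputable section

namespace Rademacher

def boolSign (b : Bool) : ℝ := if b then 1 else -1

@[simp] lemma boolSign_true : boolSign true = 1 := rfl
@[simp] lemma boolSign_false : boolSign false = -1 := rfl
@[simp] lemma boolSign_not (b : Bool) : boolSign (!b) = -boolSign b := by cases b <;> simp
@[simp] lemma boolSign_sq (b : Bool) : boolSign b ^ 2 = 1 := by cases b <;> simp
@[simp] lemma abs_boolSign (b : Bool) : |boolSign b| = 1 := by cases b <;> simp

section SignAverages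

variable {κ : Type*} [DecidableEq κ]

def flipAt (a : κ) : Equiv.Perm (κ → Bool) where
  toFun τ := update τ a (!τ a)
  invFun τ := update τ a (!τ a)
  left_inv τ := by simp
  right_inv τ := by simp

lemma flipAt_apply (a : κ) (τ : κ → Bool) : flipAt a τ = update τ a (!τ a) := rfl

lemma sum_comp_update_of_notMem {M : Type*} [AddCommMonoid M] {s : Finset κ} {a : κ}
    (ha : a ∉ s) (g : κ → Bool → M) (τ : κ → Bool) (b : Bool) :
    ∑ k ∈ s, g k (update τ a b k) = ∑ k ∈ s, g k (τ k) :=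
  sum_congr rfl fun k hk => by rw [update_of_ne (ne_of_mem_of_not_mem hk ha)]

variable [Fintype κ]

lemma expect_comp_not (f : (κ → Bool) → ℝ) :
    𝔼 τ : κ → Bool, f (fun k => !τ k) = 𝔼 τ : κ → Bool, f τ :=
  Fintype.expect_equiv (.piCongrRight fun _ => Equiv.boolNot) _ _ fun _ => rfl

lemma expect_boolSign_mul_eq_zero (a : κ) {f : (κ → Bool) → ℝ}
    (hf : ∀ τ, f (flipAt a τ) = f τ) : 𝔼 τ : κ → Bool, boolSign (τ a) * f τ = 0 := by
  have h := Fintype.expect_equiv (flipAt a) (fun τ => -(boolSign (τ a) * f τ))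
    (fun τ => boolSign (τ a) * f τ) fun τ => by simp [flipAt_apply, ← hf τ]
  rw [expect_neg_distrib] at h
  linarith

lemma expect_sum_boolSign_mul (d : κ → ℝ) : 𝔼 τ : κ → Bool, ∑ k, boolSign (τ k) * d k = 0 := by
  rw [expect_sum_comm]
  exact sum_eq_zero fun a _ => expect_boolSign_mul_eq_zero a fun _ => rfl

lemma expect_norm_sum_boolSign_smul_sq {H : Type*} [NormedAddCommGroup H]
    [InnerProductSpace ℝ H] (s : Finset κ) (x : κ → H) :
    𝔼 τ : κ → Bool, ‖∑ k ∈ s, boolSign (τ k) • x k‖ ^ 2 = ∑ k ∈ s, ‖x k‖ ^ 2 := by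
  induction s using Finset.induction_on with
  | empty => simp
  | insert a s ha ih =>
    set Z := fun τ : κ → Bool => ∑ k ∈ s, boolSign (τ k) • x k
    have hcross : 𝔼 τ : κ → Bool, boolSign (τ a) * (2 * ⟪x a, Z τ⟫) = 0 :=
      expect_boolSign_mul_eq_zero a fun τ => by
        simp only [Z, flipAt_apply, sum_comp_update_of_notMem ha (fun k b => boolSign b • x k)]
    calc 𝔼 τ : κ → Bool, ‖∑ k ∈ insert a s, boolSign (τ k) • x k‖ ^ 2
        = 𝔼 τ : κ → Bool, (‖x a‖ ^ 2 + boolSign (τ a) * (2 * ⟪x a, Z τ⟫) + ‖Z τ‖ ^ 2) := by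
          refine expect_congr rfl fun τ _ => ?_
          rw [sum_insert ha, norm_add_sq_real, norm_smul, inner_smul_left, mul_pow]
          simp only [Real.norm_eq_abs, abs_boolSign, conj_trivial]
          ring
      _ = ∑ k ∈ insert a s, ‖x k‖ ^ 2 := by
          rw [expect_add_distrib, expect_add_distrib, expect_const univ_nonempty, hcross, ih,
            sum_insert ha, add_zero]

lemma expect_sum_boolSign_mul_sq (s : Finset κ) (d : κ → ℝ) :
    𝔼 τ : κ → Bool, (∑ k ∈ s, boolSign (τ k) * d k) ^ 2 = ∑ k ∈ s, d k ^ 2 := by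
  simpa [Real.norm_eq_abs, sq_abs] using expect_norm_sum_boolSign_smul_sq s d

lemma expect_sum_boolSign_mul_pow_four_le (s : Finset κ) (d : κ → ℝ) :
    𝔼 τ : κ → Bool, (∑ k ∈ s, boolSign (τ k) * d k) ^ 4 ≤ 3 * (∑ k ∈ s, d k ^ 2) ^ 2 := by
  induction s using Finset.induction_on with
  | empty => simp
  | insert a s ha ih =>
    set Z := fun τ : κ → Bool => ∑ k ∈ s, boolSign (τ k) * d k
    have hodd : 𝔼 τ : κ → Bool, boolSign (τ a) * (4 * d a ^ 3 * Z τ + 4 * d a * Z τ ^ 3) = 0 :=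
      expect_boolSign_mul_eq_zero a fun τ => by
        simp only [Z, flipAt_apply, sum_comp_update_of_notMem ha (fun k b => boolSign b * d k)]
    have hS : 0 ≤ ∑ k ∈ s, d k ^ 2 := sum_nonneg fun _ _ => sq_nonneg _
    calc 𝔼 τ : κ → Bool, (∑ k ∈ insert a s, boolSign (τ k) * d k) ^ 4
        = 𝔼 τ : κ → Bool, (d a ^ 4 + 6 * d a ^ 2 * Z τ ^ 2 + Z τ ^ 4
            + boolSign (τ a) * (4 * d a ^ 3 * Z τ + 4 * d a * Z τ ^ 3)) := by
          refine expect_congr rfl fun τ _ => ?_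
          rw [sum_insert ha]
          linear_combination (boolSign (τ a) ^ 2 * d a ^ 4 + d a ^ 4 + 6 * d a ^ 2 * Z τ ^ 2
            + 4 * boolSign (τ a) * d a ^ 3 * Z τ) * boolSign_sq (τ a)
      _ = d a ^ 4 + 6 * d a ^ 2 * ∑ k ∈ s, d k ^ 2 + 𝔼 τ : κ → Bool, Z τ ^ 4 := by
          rw [expect_add_distrib, expect_add_distrib, expect_add_distrib,
            expect_const univ_nonempty, ← mul_expect, hodd, add_zero, expect_sum_boolSign_mul_sq]
      _ ≤ 3 * (∑ k ∈ insert a s, d k ^ 2) ^ 2 := by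
          rw [sum_insert ha]
          nlinarith [sq_nonneg (d a ^ 2)]

lemma abs_le_expect_abs_sum_boolSign_mul (d : κ → ℝ) (a : κ) :
    |d a| ≤ 𝔼 τ : κ → Bool, |∑ k, boolSign (τ k) * d k| := by
  set R := fun τ : κ → Bool => ∑ k ∈ univ.erase a, boolSign (τ k) * d k
  have hsplit : ∀ τ : κ → Bool, ∑ k, boolSign (τ k) * d k = boolSign (τ a) * d a + R τ :=
    fun τ => (add_sum_erase _ _ (mem_univ a)).symm
  have hflip : 𝔼 τ : κ → Bool, |∑ k, boolSign (τ k) * d k|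
      = 𝔼 τ : κ → Bool, |-(boolSign (τ a) * d a) + R τ| :=
    Fintype.expect_equiv (flipAt a) _ _ fun τ => by
      simp only [hsplit, R, flipAt_apply, update_self, boolSign_not, neg_mul, neg_neg,
        sum_comp_update_of_notMem (notMem_erase a univ) (fun k b => boolSign b * d k)]
  have hpt : ∀ τ : κ → Bool,
      2 * |d a| ≤ |∑ k, boolSign (τ k) * d k| + |-(boolSign (τ a) * d a) + R τ| := fun τ => by
    rw [hsplit]
    calc 2 * |d a| = |(boolSign (τ a) * d a + R τ) - (-(boolSign (τ a) * d a) + R τ)| := by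
          rw [show ∀ u r : ℝ, (u + r) - (-u + r) = 2 * u by intros; ring, abs_mul, abs_mul]
          simp
      _ ≤ _ := abs_sub _ _
  have := expect_le_expect (s := univ) fun τ _ => hpt τ
  rw [expect_const univ_nonempty, expect_add_distrib, ← hflip] at this
  linarith

lemma expect_norm_sum_boolSign_smul_le {H : Type*} [NormedAddCommGroup H]
    [InnerProductSpace ℝ H] (x : κ → H) :
    𝔼 τ : κ → Bool, ‖∑ k, boolSign (τ k) • x k‖ ≤ √(∑ k, ‖x k‖ ^ 2) := by
  rw [← expect_norm_sum_boolSign_smul_sq]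
  refine Real.le_sqrt_of_sq_le ?_
  simpa using expect_mul_sq_le_sq_mul_sq univ (fun τ : κ → Bool => ‖∑ k, boolSign (τ k) • x k‖)
    fun _ => 1

lemma expect_abs_sum_boolSign_le :
    𝔼 τ : κ → Bool, |∑ k, boolSign (τ k)| ≤ √(Fintype.card κ) := by
  simpa using expect_norm_sum_boolSign_smul_le fun _ : κ => (1 : ℝ)

lemma expect_max_sum_boolSign_zero_le :
    𝔼 τ : κ → Bool, max (∑ k, boolSign (τ k)) 0 ≤ √(Fintype.card κ) / 2 := by
  have hmean : 𝔼 τ : κ → Bool, ∑ k, boolSign (τ k) = 0 := by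
    simpa using expect_sum_boolSign_mul fun _ : κ => (1 : ℝ)
  have h : ∀ z : ℝ, max z 0 = (z + |z|) / 2 := fun z => by
    rcases le_total 0 z with hz | hz
    · rw [max_eq_left hz, abs_of_nonneg hz]; ring
    · rw [max_eq_right hz, abs_of_nonpos hz]; ring
  simp only [h, ← expect_div, expect_add_distrib, hmean, zero_add]
  exact div_le_div_of_nonneg_right expect_abs_sum_boolSign_le zero_le_two

end SignAverages

section Khintchine

def IsKhintchineConstant (κ : Type*) [Fintype κ] [DecidableEq κ] (C : ℝ) : Prop :=
  ∀ d : κ → ℝ, ∑ k, d k ^ 2 ≤ C * (𝔼 τ : κ → Bool, |∑ k, boolSign (τ k) * d k|) ^ 2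

variable {κ : Type*} [Fintype κ] [DecidableEq κ]

lemma isKhintchineConstant_card : IsKhintchineConstant κ (Fintype.card κ) := fun d => by
  have h : ∀ k ∈ univ, d k ^ 2 ≤ (𝔼 τ : κ → Bool, |∑ k, boolSign (τ k) * d k|) ^ 2 :=
    fun k _ => sq_le_sq' (abs_le.mp (abs_le_expect_abs_sum_boolSign_mul d k)).1
      (abs_le.mp (abs_le_expect_abs_sum_boolSign_mul d k)).2
  simpa using sum_le_sum h

lemma isKhintchineConstant_three : IsKhintchineConstant κ 3 := fun d => by
  set Z := fun τ : κ → Bool => ∑ k, boolSign (τ k) * d k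
  set s := ∑ k, d k ^ 2
  set t := 𝔼 τ : κ → Bool, |Z τ|
  set u := √(3 * s)
  have hs : 0 ≤ s := sum_nonneg fun _ _ => sq_nonneg _
  have ht : 0 ≤ t := expect_nonneg fun _ _ => abs_nonneg _
  have hu : 0 ≤ u := Real.sqrt_nonneg _
  have hu2 : u ^ 2 = 3 * s := Real.sq_sqrt (by positivity)
  -- average `w (w - u)² (w + 2u) ≥ 0` at `w = |Z|` and insert the second and fourth moments
  have hpt : ∀ τ, 3 * u ^ 2 * Z τ ^ 2 ≤ 2 * u ^ 3 * |Z τ| + Z τ ^ 4 := fun τ => by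
    have h := mul_nonneg (abs_nonneg (Z τ))
      (mul_nonneg (sq_nonneg (|Z τ| - u)) (by positivity : 0 ≤ |Z τ| + 2 * u))
    nlinarith [sq_abs (Z τ), pow_abs (Z τ) 4]
  have havg := expect_le_expect (s := univ) fun τ _ => hpt τ
  rw [← mul_expect, expect_add_distrib, ← mul_expect] at havg
  have h2 := expect_sum_boolSign_mul_sq univ d
  have h4 := expect_sum_boolSign_mul_pow_four_le univ d
  have hut : u ^ 4 ≤ 3 * t * u ^ 3 := by nlinarith
  have hu3 : u ≤ 3 * t := by
    rcases hu.eq_or_lt with h0 | hpos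
    · rw [← h0]; positivity
    · exact le_of_mul_le_mul_right (by nlinarith) (pow_pos hpos 3)
  nlinarith

end Khintchine

lemma expect_fin_cons {α : Type*} [Fintype α] {n : ℕ} (f : (Fin (n + 1) → α) → ℝ) :
    𝔼 σ, f σ = 𝔼 a : α, 𝔼 σ : Fin n → α, f (Fin.cons a σ) := by
  rw [← expect_product' univ univ fun a σ => f (Fin.cons a σ), univ_product_univ]
  exact Fintype.expect_equiv (Fin.consEquiv fun _ => α).symm _ _ fun σ => by simp [Fin.consEquiv]

lemma expect_comp_eval {κ X : Type*} [Fintype κ] [DecidableEq κ] [Fintype X] [Nonempty X]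
    (k₀ : κ) (f : X → ℝ) : 𝔼 h : κ → X, f (h k₀) = 𝔼 x, f x := by
  refine (Fintype.expect_equiv (Equiv.piSplitAt k₀ fun _ => X) _ (fun p => f p.1)
    fun _ => rfl).trans ?_
  rw [← univ_product_univ, expect_product]
  simp

lemma expect_comp_column {ν κ : Type*} [Fintype ν] [DecidableEq ν] [Fintype κ] [DecidableEq κ]
    (k₀ : κ) (f : (ν → Bool) → ℝ) : 𝔼 τ : ν → κ → Bool, f (fun i => τ i k₀) = 𝔼 σ, f σ :=
  (Fintype.expect_equiv (Equiv.piComm fun _ _ => Bool) _ (fun h => f (h k₀)) fun _ => rfl).trans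
    (expect_comp_eval k₀ f)

section Contraction

lemma sum_boolSign_mul_le {κ : Type*} [Fintype κ] (τ : κ → Bool) {g : κ → ℝ} {B : ℝ}
    (hg : ∀ k, |g k| ≤ B) : ∑ k, boolSign (τ k) * g k ≤ Fintype.card κ * B :=
  calc ∑ k, boolSign (τ k) * g k ≤ ∑ _k : κ, B :=
        sum_le_sum fun k _ => (le_abs_self _).trans (by simpa [abs_mul] using hg k)
    _ = Fintype.card κ * B := by simp

lemma bddAbove_range_sum_boolSign_mul_add {Θ κ : Type*} [Fintype κ] (τ : κ → Bool)
    {g : Θ → κ → ℝ} {B : ℝ} (hg : ∀ θ k, |g θ k| ≤ B) {F : Θ → ℝ}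
    (hF : BddAbove (Set.range F)) :
    BddAbove (Set.range fun θ => ∑ k, boolSign (τ k) * g θ k + F θ) := by
  obtain ⟨M, hM⟩ := hF
  exact ⟨Fintype.card κ * B + M, by
    rintro _ ⟨θ, rfl⟩
    exact add_le_add (sum_boolSign_mul_le τ (hg θ)) (hM ⟨θ, rfl⟩)⟩

variable {Θ κ : Type*} [Nonempty Θ] [Fintype κ] [DecidableEq κ]

lemma expect_iSup_boolSign_mul_add_le {a F : Θ → ℝ} {G : Θ → κ → ℝ}
    (hbdd : ∀ τ : κ → Bool, BddAbove (Set.range fun θ => ∑ k, boolSign (τ k) * G θ k + F θ))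
    (hlip : ∀ θ θ', a θ - a θ' ≤ 𝔼 τ : κ → Bool, |∑ k, boolSign (τ k) * (G θ k - G θ' k)|) :
    𝔼 s : Bool, ⨆ θ, (boolSign s * a θ + F θ)
      ≤ 𝔼 τ : κ → Bool, ⨆ θ, (∑ k, boolSign (τ k) * G θ k + F θ) := by
  set S := fun τ : κ → Bool => ⨆ θ, (∑ k, boolSign (τ k) * G θ k + F θ)
  have hpair : ∀ θ θ', (a θ + F θ) + (-a θ' + F θ') ≤ 2 * 𝔼 τ : κ → Bool, S τ := by
    intro θ θ'
    -- `|Z|` is `Z` or `-Z`, and flipping all signs turns `Z` into `-Z`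
    have hpt : ∀ τ : κ → Bool, F θ + F θ' + |∑ k, boolSign (τ k) * (G θ k - G θ' k)|
        ≤ S τ + S (fun k => !τ k) := by
      intro τ
      have h1 := le_ciSup (hbdd τ) θ
      have h2 := le_ciSup (hbdd τ) θ'
      have h3 : _ ≤ S fun k => !τ k := le_ciSup (hbdd fun k => !τ k) θ
      have h4 : _ ≤ S fun k => !τ k := le_ciSup (hbdd fun k => !τ k) θ'
      simp only [boolSign_not, neg_mul, sum_neg_distrib] at h3 h4
      simp only [mul_sub, sum_sub_distrib]
      cases abs_cases (∑ k, boolSign (τ k) * G θ k - ∑ k, boolSign (τ k) * G θ' k) <;> linarith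
    have h := expect_le_expect (s := univ) fun τ _ => hpt τ
    simp only [expect_add_distrib, Fintype.expect_const, expect_comp_not S] at h
    linarith [hlip θ θ']
  have hsup : (⨆ θ, (a θ + F θ)) + ⨆ θ, (-a θ + F θ) ≤ 2 * 𝔼 τ : κ → Bool, S τ := by
    rw [← le_sub_iff_add_le']
    refine ciSup_le fun θ' => ?_
    rw [le_sub_iff_add_le', ← le_sub_iff_add_le]
    exact ciSup_le fun θ => le_sub_iff_add_le.mpr (hpair θ θ')
  rw [Fintype.expect_eq_sum_div_card, Fintype.sum_bool, Fintype.card_bool]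
  simp only [boolSign_true, boolSign_false, one_mul, neg_one_mul]
  push_cast
  linarith

/-- Maurer's vector contraction inequality. -/
theorem expect_iSup_sum_boolSign_mul_le {n : ℕ} (a : Fin n → Θ → ℝ) (G : Fin n → Θ → κ → ℝ)
    {A B : ℝ} (ha : ∀ i θ, |a i θ| ≤ A) (hG : ∀ i θ k, |G i θ k| ≤ B)
    (hlip : ∀ i θ θ', a i θ - a i θ' ≤
      𝔼 τ : κ → Bool, |∑ k, boolSign (τ k) * (G i θ k - G i θ' k)|)
    (F : Θ → ℝ) (hF : BddAbove (Set.range F)) :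
    𝔼 σ : Fin n → Bool, ⨆ θ, (∑ i, boolSign (σ i) * a i θ + F θ)
      ≤ 𝔼 τ : Fin n → κ → Bool, ⨆ θ, (∑ i, ∑ k, boolSign (τ i k) * G i θ k + F θ) := by
  induction n generalizing F with
  | zero => simp
  | succ n ih =>
    have hbdd (σ : Fin n → Bool) := bddAbove_range_sum_boolSign_mul_add σ
      (fun θ i => ha i.succ θ) hF
    calc 𝔼 σ : Fin (n + 1) → Bool, ⨆ θ, (∑ i, boolSign (σ i) * a i θ + F θ)
        = 𝔼 σ : Fin n → Bool, 𝔼 s : Bool, ⨆ θ,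
            (boolSign s * a 0 θ + (∑ i, boolSign (σ i) * a i.succ θ + F θ)) := by
          simp only [expect_fin_cons, Fin.sum_univ_succ, Fin.cons_zero, Fin.cons_succ, add_assoc]
          exact expect_comm _ _ _
      _ ≤ 𝔼 σ : Fin n → Bool, 𝔼 τ : κ → Bool, ⨆ θ,
            (∑ k, boolSign (τ k) * G 0 θ k + (∑ i, boolSign (σ i) * a i.succ θ + F θ)) :=
          expect_le_expect fun σ _ => expect_iSup_boolSign_mul_add_le
            (fun τ => bddAbove_range_sum_boolSign_mul_add τ (hG 0) (hbdd σ)) (hlip 0)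
      _ = 𝔼 τ : κ → Bool, 𝔼 σ : Fin n → Bool, ⨆ θ,
            (∑ i, boolSign (σ i) * a i.succ θ + (∑ k, boolSign (τ k) * G 0 θ k + F θ)) := by
          simp only [add_left_comm]
          exact expect_comm _ _ _
      _ ≤ 𝔼 τ : κ → Bool, 𝔼 τ' : Fin n → κ → Bool, ⨆ θ,
            (∑ i, ∑ k, boolSign (τ' i k) * G i.succ θ k + (∑ k, boolSign (τ k) * G 0 θ k + F θ)) :=
          expect_le_expect fun τ _ => ih _ _ (fun i => ha i.succ) (fun i => hG i.succ)
            (fun i => hlip i.succ) _ (bddAbove_range_sum_boolSign_mul_add τ (hG 0) hF)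
      _ = 𝔼 τ : Fin (n + 1) → κ → Bool, ⨆ θ, (∑ i, ∑ k, boolSign (τ i k) * G i θ k + F θ) := by
          simp only [expect_fin_cons (n := n), Fin.sum_univ_succ, Fin.cons_zero, Fin.cons_succ,
            add_left_comm, add_assoc]

end Contraction

section SquaredDistance

open EuclideanSpace (single)

variable {H ι : Type*} [NormedAddCommGroup H] [InnerProductSpace ℝ H] [Fintype ι] [DecidableEq ι]

lemma apply_eq_sum_smul (T : EuclideanSpace ℝ ι →L[ℝ] H) (y : EuclideanSpace ℝ ι) :
    T y = ∑ k, y k • T (single k 1) := by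
  conv_lhs => rw [← (EuclideanSpace.basisFun ι ℝ).sum_repr y]
  simp

lemma norm_apply_le_card_mul {c : ℝ} {T : EuclideanSpace ℝ ι →L[ℝ] H}
    (hT : ∀ k, ‖T (single k 1)‖ ≤ c) {y : EuclideanSpace ℝ ι} (hy : ‖y‖ ≤ 1) :
    ‖T y‖ ≤ Fintype.card ι * c := by
  rw [apply_eq_sum_smul]
  calc ‖∑ k, y k • T (single k 1)‖ ≤ ∑ k, ‖y k • T (single k 1)‖ := norm_sum_le _ _
    _ ≤ ∑ _k : ι, c := sum_le_sum fun k _ => by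
        rw [norm_smul]
        exact (mul_le_mul ((PiLp.norm_apply_le y k).trans hy) (hT k) (norm_nonneg _)
          zero_le_one).trans_eq (one_mul c)
    _ = Fintype.card ι * c := by simp

def sqDistFeature (x : H) (T : EuclideanSpace ℝ ι →L[ℝ] H) : ι ⊕ ι × ι → ℝ :=
  Sum.elim (fun k => 2 * ⟪x, T (single k 1)⟫) fun p => ⟪T (single p.1 1), T (single p.2 1)⟫

def sqDistCoeff (y : EuclideanSpace ℝ ι) : ι ⊕ ι × ι → ℝ :=
  Sum.elim (fun k => -y k) fun p => y p.1 * y p.2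

lemma norm_sub_apply_sq (x : H) (T : EuclideanSpace ℝ ι →L[ℝ] H) (y : EuclideanSpace ℝ ι) :
    ‖x - T y‖ ^ 2 = ‖x‖ ^ 2 + ∑ j, sqDistCoeff y j * sqDistFeature x T j := by
  have hlin : ⟪x, T y⟫ = ∑ k, y k * ⟪x, T (single k 1)⟫ := by
    simp_rw [apply_eq_sum_smul T y, inner_sum, real_inner_smul_right]
  have hquad : ⟪T y, T y⟫ = ∑ j, ∑ k, y j * y k * ⟪T (single j 1), T (single k 1)⟫ := by
    conv_lhs => rw [apply_eq_sum_smul T y]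
    simp_rw [sum_inner, real_inner_smul_left, inner_sum, real_inner_smul_right, mul_sum, mul_assoc]
  rw [norm_sub_sq_real, ← real_inner_self_eq_norm_sq (T y), hlin, hquad]
  have hlin' : ∑ k, -y k * (2 * ⟪x, T (single k 1)⟫) = -(2 * ∑ k, y k * ⟪x, T (single k 1)⟫) := by
    rw [mul_sum, ← sum_neg_distrib]
    exact sum_congr rfl fun _ _ => by ring
  simp only [Fintype.sum_sum_type, Fintype.sum_prod_type, sqDistCoeff, sqDistFeature,
    Sum.elim_inl, Sum.elim_inr, hlin']
  ring

omit [DecidableEq ι] in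
lemma sum_sqDistCoeff_sq (y : EuclideanSpace ℝ ι) :
    ∑ j, sqDistCoeff y j ^ 2 = ‖y‖ ^ 2 + (‖y‖ ^ 2) ^ 2 := by
  rw [EuclideanSpace.real_norm_sq_eq, sq (∑ _, _), sum_mul_sum]
  simp [Fintype.sum_sum_type, Fintype.sum_prod_type, sqDistCoeff, mul_pow]

lemma sInf_sub_sInf_le {Y : Set (EuclideanSpace ℝ ι)} (hYne : Y.Nonempty)
    (hYb : ∀ y ∈ Y, ‖y‖ ≤ 1) {C : ℝ} (hC : IsKhintchineConstant (ι ⊕ ι × ι) C) (x : H)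
    (T T' : EuclideanSpace ℝ ι →L[ℝ] H) :
    sInf ((fun y => ‖x - T y‖ ^ 2) '' Y) - sInf ((fun y => ‖x - T' y‖ ^ 2) '' Y)
      ≤ √(2 * C) * 𝔼 τ : ι ⊕ ι × ι → Bool,
          |∑ j, boolSign (τ j) * (sqDistFeature x T j - sqDistFeature x T' j)| := by
  set Δ := fun j => sqDistFeature x T j - sqDistFeature x T' j
  set t := 𝔼 τ : ι ⊕ ι × ι → Bool, |∑ j, boolSign (τ j) * Δ j|
  have ht : 0 ≤ t := expect_nonneg fun _ _ => abs_nonneg _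
  have hstep : ∀ y ∈ Y, ‖x - T y‖ ^ 2 - ‖x - T' y‖ ^ 2 ≤ √(2 * C) * t := by
    intro y hy
    have hcoeff : ∑ j, sqDistCoeff y j ^ 2 ≤ 2 := by
      have := hYb y hy
      rw [sum_sqDistCoeff_sq]
      nlinarith [norm_nonneg y, pow_le_one₀ (norm_nonneg y) this (n := 2)]
    calc ‖x - T y‖ ^ 2 - ‖x - T' y‖ ^ 2 = ∑ j, sqDistCoeff y j * Δ j := by
          simp only [norm_sub_apply_sq, Δ, mul_sub, sum_sub_distrib]
          ring
      _ ≤ √(∑ j, sqDistCoeff y j ^ 2) * √(∑ j, Δ j ^ 2) := Real.sum_mul_le_sqrt_mul_sqrt _ _ _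
      _ ≤ √2 * √(C * t ^ 2) := by gcongr; exact hC Δ
      _ = √(2 * C) * t := by
          rw [← Real.sqrt_mul zero_le_two, ← mul_assoc, Real.sqrt_mul' _ (sq_nonneg t),
            Real.sqrt_sq ht]
  have hbdd : BddBelow ((fun y => ‖x - T y‖ ^ 2) '' Y) :=
    ⟨0, by rintro _ ⟨y, -, rfl⟩; positivity⟩
  rw [sub_le_comm]
  refine le_csInf (hYne.image _) ?_
  rintro _ ⟨y, hy, rfl⟩
  linarith [csInf_le hbdd ⟨y, hy, rfl⟩, hstep y hy]

lemma abs_sInf_le {Y : Set (EuclideanSpace ℝ ι)} (hYne : Y.Nonempty) (hYb : ∀ y ∈ Y, ‖y‖ ≤ 1)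
    {x : H} (hx : ‖x‖ ≤ 1) {c : ℝ} {T : EuclideanSpace ℝ ι →L[ℝ] H}
    (hT : ∀ k, ‖T (single k 1)‖ ≤ c) :
    |sInf ((fun y => ‖x - T y‖ ^ 2) '' Y)| ≤ (1 + Fintype.card ι * c) ^ 2 := by
  obtain ⟨y, hy⟩ := hYne
  have hbdd : BddBelow ((fun y => ‖x - T y‖ ^ 2) '' Y) :=
    ⟨0, by rintro _ ⟨y, -, rfl⟩; positivity⟩
  have hnonneg : 0 ≤ sInf ((fun y => ‖x - T y‖ ^ 2) '' Y) :=
    le_csInf ⟨_, y, hy, rfl⟩ (by rintro _ ⟨y, -, rfl⟩; positivity)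
  rw [abs_of_nonneg hnonneg]
  calc sInf ((fun y => ‖x - T y‖ ^ 2) '' Y) ≤ ‖x - T y‖ ^ 2 := csInf_le hbdd ⟨y, hy, rfl⟩
    _ ≤ (1 + Fintype.card ι * c) ^ 2 := by
        gcongr
        exact (norm_sub_le _ _).trans (add_le_add hx (norm_apply_le_card_mul hT (hYb y hy)))

omit [Fintype ι] in
lemma abs_sqDistFeature_le {x : H} (hx : ‖x‖ ≤ 1) {c : ℝ} {T : EuclideanSpace ℝ ι →L[ℝ] H}
    (hT : ∀ k, ‖T (single k 1)‖ ≤ c) (j : ι ⊕ ι × ι) :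
    |sqDistFeature x T j| ≤ 2 * c + c ^ 2 := by
  have hc : ∀ k : ι, 0 ≤ c := fun k => (norm_nonneg _).trans (hT k)
  rcases j with k | ⟨j, k⟩
  · have := (abs_real_inner_le_norm x (T (single k 1))).trans
      (mul_le_mul hx (hT k) (norm_nonneg _) zero_le_one)
    simp only [sqDistFeature, Sum.elim_inl, abs_mul, abs_two]
    nlinarith [hc k]
  · have := (abs_real_inner_le_norm _ _).trans
      (mul_le_mul (hT j) (hT k) (norm_nonneg _) (hc k))
    simp only [sqDistFeature, Sum.elim_inr]
    nlinarith [hc k]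

def sqDistFeatureBound (c : ℝ) {m : ℕ} (x : Fin m → H) (σ : Fin m → Bool) : ι ⊕ ι × ι → ℝ :=
  Sum.elim (fun _ => 2 * c * ‖∑ i, boolSign (σ i) • x i‖)
    fun p => c ^ 2 * if p.1 = p.2 then max (∑ i, boolSign (σ i)) 0 else |∑ i, boolSign (σ i)|

omit [Fintype ι] in
lemma sum_boolSign_mul_sqDistFeature_le {c : ℝ} {T : EuclideanSpace ℝ ι →L[ℝ] H}
    (hT : ∀ k, ‖T (single k 1)‖ ≤ c) {m : ℕ} (x : Fin m → H) (σ : Fin m → Bool)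
    (j : ι ⊕ ι × ι) :
    ∑ i, boolSign (σ i) * sqDistFeature (x i) T j ≤ sqDistFeatureBound c x σ j := by
  rcases j with k | ⟨j, k⟩
  · simp only [sqDistFeature, sqDistFeatureBound, Sum.elim_inl]
    calc ∑ i, boolSign (σ i) * (2 * ⟪x i, T (single k 1)⟫)
        = 2 * ⟪∑ i, boolSign (σ i) • x i, T (single k 1)⟫ := by
          simp_rw [sum_inner, real_inner_smul_left, mul_sum, mul_left_comm]
      _ ≤ 2 * (‖∑ i, boolSign (σ i) • x i‖ * c) := by
          gcongr
          exact (real_inner_le_norm _ _).trans (mul_le_mul_of_nonneg_left (hT k) (norm_nonneg _))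
      _ = 2 * c * ‖∑ i, boolSign (σ i) • x i‖ := by ring
  · simp only [sqDistFeature, sqDistFeatureBound, Sum.elim_inr, ← sum_mul]
    set z := ∑ i, boolSign (σ i)
    have hq := (abs_real_inner_le_norm (T (single j 1)) (T (single k 1))).trans
      (mul_le_mul (hT j) (hT k) (norm_nonneg _) ((norm_nonneg _).trans (hT j)))
    split_ifs with hjk
    · subst hjk
      rw [real_inner_self_eq_norm_sq] at hq ⊢
      rw [abs_of_nonneg (sq_nonneg _)] at hq
      rcases le_total 0 z with hz | hz
      · rw [max_eq_left hz]; nlinarith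
      · rw [max_eq_right hz]; nlinarith [sq_nonneg ‖T (single j 1)‖]
    · calc z * ⟪T (single j 1), T (single k 1)⟫ ≤ |z| * |⟪T (single j 1), T (single k 1)⟫| := by
            rw [← abs_mul]; exact le_abs_self _
        _ ≤ c ^ 2 * |z| := by nlinarith [abs_nonneg z]

omit [Fintype ι] in
lemma expect_sqDistFeatureBound_le {c : ℝ} (hc : 0 ≤ c) {m : ℕ} {x : Fin m → H}
    (hx : ∀ i, ‖x i‖ ≤ 1) (j : ι ⊕ ι × ι) :
    𝔼 σ : Fin m → Bool, sqDistFeatureBound c x σ j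
      ≤ √m * Sum.elim (fun _ => 2 * c)
          (fun p : ι × ι => if p.1 = p.2 then c ^ 2 / 2 else c ^ 2) j := by
  rcases j with k | ⟨j, k⟩
  · have hxm : ∑ i, ‖x i‖ ^ 2 ≤ m := by
      simpa using sum_le_sum fun i (_ : i ∈ univ) => pow_le_one₀ (norm_nonneg (x i)) (hx i) (n := 2)
    simp only [sqDistFeatureBound, Sum.elim_inl, ← mul_expect]
    have := (expect_norm_sum_boolSign_smul_le x).trans (Real.sqrt_le_sqrt hxm)
    nlinarith
  · simp only [sqDistFeatureBound, Sum.elim_inr, ← mul_expect]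
    split_ifs
    · have := expect_max_sum_boolSign_zero_le (κ := Fin m)
      simp only [Fintype.card_fin] at this
      nlinarith [sq_nonneg c]
    · have := expect_abs_sum_boolSign_le (κ := Fin m)
      simp only [Fintype.card_fin] at this
      nlinarith [sq_nonneg c]

lemma expect_iSup_sum_boolSign_mul_sqDistFeature_le {c : ℝ} (hc : 0 ≤ c) {m : ℕ}
    {x : Fin m → H} (hx : ∀ i, ‖x i‖ ≤ 1) :
    𝔼 τ : Fin m → ι ⊕ ι × ι → Bool,
        ⨆ T : {T : EuclideanSpace ℝ ι →L[ℝ] H // ∀ k, ‖T (single k 1)‖ ≤ c},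
          ∑ i, ∑ j, boolSign (τ i j) * sqDistFeature (x i) T.1 j
      ≤ (2 * c * Fintype.card ι
          + c ^ 2 * ((Fintype.card ι : ℝ) ^ 2 - Fintype.card ι / 2)) * √m := by
  have : Nonempty {T : EuclideanSpace ℝ ι →L[ℝ] H // ∀ k, ‖T (single k 1)‖ ≤ c} :=
    ⟨⟨0, fun _ => by simpa using hc⟩⟩
  have hdiag : ∀ a : ι, ∑ b, (if a = b then c ^ 2 / 2 else c ^ 2)
      = Fintype.card ι * c ^ 2 - c ^ 2 / 2 := fun a => by
    have h : ∀ b, (if a = b then c ^ 2 / 2 else c ^ 2) = c ^ 2 - if a = b then c ^ 2 / 2 else 0 :=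
      fun b => by split_ifs <;> ring
    simp [h, sum_sub_distrib]
  calc _ ≤ 𝔼 τ : Fin m → ι ⊕ ι × ι → Bool, ∑ j, sqDistFeatureBound c x (fun i => τ i j) j :=
        expect_le_expect fun τ _ => ciSup_le fun T => by
          rw [sum_comm]
          exact sum_le_sum fun j _ => sum_boolSign_mul_sqDistFeature_le T.2 x _ j
    _ = ∑ j, 𝔼 σ : Fin m → Bool, sqDistFeatureBound c x σ j := by
        rw [expect_sum_comm]
        exact sum_congr rfl fun j _ => expect_comp_column j (sqDistFeatureBound c x · j)
    _ ≤ ∑ j, √m * Sum.elim (fun _ => 2 * c)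
          (fun p : ι × ι => if p.1 = p.2 then c ^ 2 / 2 else c ^ 2) j :=
        sum_le_sum fun j _ => expect_sqDistFeatureBound_le hc hx j
    _ = _ := by
        simp only [← mul_sum, Fintype.sum_sum_type, Fintype.sum_prod_type, Sum.elim_inl,
          Sum.elim_inr, hdiag, sum_const, card_univ, nsmul_eq_mul]
        ring

theorem expect_iSup_sum_boolSign_mul_sInf_le {c : ℝ} (hc : 0 ≤ c)
    {Y : Set (EuclideanSpace ℝ ι)} (hYne : Y.Nonempty) (hYb : ∀ y ∈ Y, ‖y‖ ≤ 1) {C : ℝ}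
    (hC : IsKhintchineConstant (ι ⊕ ι × ι) C) {m : ℕ} {x : Fin m → H} (hx : ∀ i, ‖x i‖ ≤ 1) :
    𝔼 σ : Fin m → Bool,
        ⨆ T : {T : EuclideanSpace ℝ ι →L[ℝ] H // ∀ k, ‖T (single k 1)‖ ≤ c},
          ∑ i, boolSign (σ i) * sInf ((fun y => ‖x i - T.1 y‖ ^ 2) '' Y)
      ≤ √(2 * C) * ((2 * c * Fintype.card ι
          + c ^ 2 * ((Fintype.card ι : ℝ) ^ 2 - Fintype.card ι / 2)) * √m) := by
  have : Nonempty {T : EuclideanSpace ℝ ι →L[ℝ] H // ∀ k, ‖T (single k 1)‖ ≤ c} :=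
    ⟨⟨0, fun _ => by simpa using hc⟩⟩
  have hW : 0 ≤ √(2 * C) := Real.sqrt_nonneg _
  have hcontr := expect_iSup_sum_boolSign_mul_le
    (fun i (T : {T : EuclideanSpace ℝ ι →L[ℝ] H // ∀ k, ‖T (single k 1)‖ ≤ c}) =>
      sInf ((fun y => ‖x i - T.1 y‖ ^ 2) '' Y))
    (fun i T j => √(2 * C) * sqDistFeature (x i) T.1 j)
    (fun i T => abs_sInf_le hYne hYb (hx i) T.2)
    (fun i T j => by
      rw [abs_mul, abs_of_nonneg hW]
      exact mul_le_mul_of_nonneg_left (abs_sqDistFeature_le (hx i) T.2 j) hW)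
    (fun i T T' => (sInf_sub_sInf_le hYne hYb hC (x i) T.1 T'.1).trans_eq (by
      simp_rw [← mul_sub, mul_left_comm _ √(2 * C), ← mul_sum, abs_mul, abs_of_nonneg hW,
        mul_expect]))
    (fun _ => 0) (by simp)
  simp only [add_zero] at hcontr
  refine hcontr.trans ?_
  simp_rw [mul_left_comm _ √(2 * C), ← mul_sum, ← Real.mul_iSup_of_nonneg hW, ← mul_expect]
  gcongr
  exact expect_iSup_sum_boolSign_mul_sqDistFeature_le hc hx

end SquaredDistance

lemma sum_sSup_image_div_eq_expect_iSup {X Θ : Type*} {m : ℕ} (g : Θ → X → ℝ) (S : Set Θ)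
    (x : Fin m → X) :
    (∑ ε : Fin m → Bool,
        sSup ((fun f : X → ℝ => ∑ i, (if ε i then (1 : ℝ) else -1) * f (x i)) '' (g '' S))) / 2 ^ m
      = 𝔼 σ : Fin m → Bool, ⨆ θ : S, ∑ i, boolSign (σ i) * g θ (x i) := by
  rw [Fintype.expect_eq_sum_div_card]
  simp [Set.image_image, sSup_image', boolSign]

lemma integral_le_of_ae_le {α : Type*} [MeasurableSpace α] {μ : Measure α} [IsProbabilityMeasure μ]
    {f : α → ℝ} {Q : ℝ} (hQ : 0 ≤ Q) (hf : ∀ᵐ x ∂μ, f x ≤ Q) : ∫ x, f x ∂μ ≤ Q := by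
  by_cases hint : Integrable f μ
  · simpa using integral_mono_ae hint (integrable_const Q) hf
  · rwa [integral_undef hint]

lemma exists_isKhintchineConstant_le (K : ℕ) {c : ℝ} (hc : 1 ≤ c) :
    ∃ C, IsKhintchineConstant (Fin K ⊕ Fin K × Fin K) C ∧
      √(2 * C) * (2 * c * K + c ^ 2 * ((K : ℝ) ^ 2 - K / 2)) ≤ 3 * √π * c ^ 2 * K ^ 2 := by
  have hpi : 5 / 3 ≤ √π := Real.le_sqrt_of_sq_le (by nlinarith [Real.pi_gt_three])
  obtain rfl | hK := eq_or_ne K 1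
  · refine ⟨_, isKhintchineConstant_card, ?_⟩
    have h4 : √(2 * 2) = 2 := by rw [show (2 : ℝ) * 2 = 2 ^ 2 by norm_num, Real.sqrt_sq zero_le_two]
    simp only [Fintype.card_sum, Fintype.card_prod, Fintype.card_fin]
    norm_num [h4]
    nlinarith
  · refine ⟨3, isKhintchineConstant_three, ?_⟩
    have h6 : √(2 * 3) ≤ 5 / 2 := Real.sqrt_le_iff.mpr ⟨by norm_num, by norm_num⟩
    have hK' : (K : ℝ) = 0 ∨ 2 ≤ (K : ℝ) := by
      rcases Nat.lt_or_ge K 2 with h | h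
      · left; exact_mod_cast (by omega : K = 0)
      · right; exact_mod_cast h
    rcases hK' with h0 | h2
    · simp [h0]
    · have hcK : 2 ≤ c * K := by nlinarith
      calc √(2 * 3) * (2 * c * K + c ^ 2 * ((K : ℝ) ^ 2 - K / 2))
          ≤ 5 / 2 * (2 * (c ^ 2 * K ^ 2)) := by
            gcongr
            · have hK2 : 0 ≤ (K : ℝ) ^ 2 - K / 2 := by nlinarith
              nlinarith [mul_nonneg (sq_nonneg c) hK2]
            · nlinarith [mul_nonneg (by linarith : 0 ≤ c * K) (by linarith : 0 ≤ c * K - 2)]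
        _ ≤ 3 * √π * c ^ 2 * K ^ 2 := by nlinarith [sq_nonneg (c * K)]

end Rademacher

end

theorem stmt7_general {H : Type*} [NormedAddCommGroup H] [InnerProductSpace ℝ H]
    [MeasurableSpace H]
    {K m : ℕ}
    (μ : Measure H) [IsProbabilityMeasure μ] (hμ : ∀ᵐ x ∂μ, ‖x‖ ≤ 1)
    {c : ℝ} (hc : 1 ≤ c)
    {Y : Set (EuclideanSpace ℝ (Fin K))} (hYne : Y.Nonempty)
    (hYb : ∀ y ∈ Y, ‖y‖ ≤ 1) :
    rademacher m
      ((fun T : EuclideanSpace ℝ (Fin K) →L[ℝ] H =>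
          fun x : H => sInf ((fun y => ‖x - T y‖ ^ 2) '' Y)) ''
        {T | ∀ k, ‖T (EuclideanSpace.single k 1)‖ ≤ c}) μ ≤
      6 * c ^ 2 * K ^ 2 * Real.sqrt (Real.pi / m) := by
  obtain ⟨C, hC, hCK⟩ := Rademacher.exists_isKhintchineConstant_le K hc
  rw [rademacher]
  calc _ ≤ 2 / m * (3 * √π * c ^ 2 * K ^ 2 * √m) := by
        gcongr
        refine Rademacher.integral_le_of_ae_le (by positivity) ?_
        filter_upwards [ae_all_iff.2 fun i => (Measure.quasiMeasurePreserving_eval _ i).ae hμ]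
          with x hx
        rw [Rademacher.sum_sSup_image_div_eq_expect_iSup]
        refine (Rademacher.expect_iSup_sum_boolSign_mul_sInf_le (by linarith) hYne hYb hC
          hx).trans ?_
        simp only [Fintype.card_fin, ← mul_assoc]
        gcongr
    _ = 6 * c ^ 2 * K ^ 2 * √(π / m) := by
        rw [Real.sqrt_div' _ (Nat.cast_nonneg m), div_eq_mul_one_div √π, ← Real.sqrt_div_self']
        ring

theorem stmt7 {H : Type*} [NormedAddCommGroup H] [InnerProductSpace ℝ H]
    [MeasurableSpace H] [BorelSpace H]
    {K m : ℕ} (hK : 1 ≤ K) (hm : 1 ≤ m)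
    (μ : Measure H) [IsProbabilityMeasure μ] (hμ : ∀ᵐ x ∂μ, ‖x‖ ≤ 1)
    {c : ℝ} (hc : 1 ≤ c)
    {Y : Set (EuclideanSpace ℝ (Fin K))} (hYne : Y.Nonempty) (hYcl : IsClosed Y)
    (hYb : ∀ y ∈ Y, ‖y‖ ≤ 1) :
    rademacher m
      ((fun T : EuclideanSpace ℝ (Fin K) →L[ℝ] H =>
          fun x : H => sInf ((fun y => ‖x - T y‖ ^ 2) '' Y)) ''
        {T | ∀ k, ‖T (EuclideanSpace.single k 1)‖ ≤ c}) μ ≤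
      6 * c ^ 2 * K ^ 2 * Real.sqrt (Real.pi / m) :=
  stmt7_general μ hμ hc hYne hYb
end

section
/- Suppose μ is supported on the unit ball of H, (e_k)_{k=1}^K is the canonical orthonormal basis of ℝ^K, c ≥ 1, and 𝒯 is the class of all bounded linear maps T : ℝ^K → H with ‖T e_k‖ ≤ c for 1 ≤ k ≤ K. Let Y = {e_1, …, e_K} and F_Y = { x ↦ min_{1 ≤ k ≤ K} ‖x − T e_k‖² : T ∈ 𝒯 }. Then R_m(F_Y, μ) ≤ c² K √(18π/m). -/
/-!
A function of the class is the pointwise minimum over the centres `T e_k` of `‖x - T e_k‖²`.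
Since `2 min(u, v) = u + v - |u - v|`, the contraction principle (Rademacher averages do not
increase when every coordinate passes through a 1-Lipschitz map, proved one coordinate at a time by
pairing each sign pattern with its flip) bounds the Rademacher average of a minimum by the sum of
those of its terms. For one centre `u` with `‖u‖ ≤ c`, expand `‖x - u‖² = ‖x‖² - 2⟪x, u⟫ + ‖u‖²`:
the first term does not depend on `u` and averages to zero over the signs, the other two contribute
at most `2c E‖Σ σᵢ xᵢ‖ + c² E|Σ σᵢ|`, and both expectations are at most `√m` by Cauchy–Schwarz and
the orthogonality of the signs. Hence `R_m ≤ 2K(2c + c²)/√m ≤ 6c²K/√m ≤ c²K√(18π/m)`.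
-/

open MeasureTheory

open Finset

section Signs

variable {ι : Type*}

def boolSign (b : Bool) : ℝ := if b then 1 else -1

@[simp] lemma boolSign_not (b : Bool) : boolSign (!b) = -boolSign b := by
  cases b <;> simp [boolSign]

@[simp] lemma abs_boolSign (b : Bool) : |boolSign b| = 1 := by
  cases b <;> simp [boolSign]

@[simp] lemma boolSign_mul_self (b : Bool) : boolSign b * boolSign b = 1 := by
  cases b <;> simp [boolSign]

variable [DecidableEq ι]

def flipAt (a : ι) : Equiv.Perm (ι → Bool) :=
  Function.Involutive.toPerm (fun ε => Function.update ε a (!ε a)) fun ε => by simp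

lemma flipAt_apply (a : ι) (ε : ι → Bool) : flipAt a ε = Function.update ε a (!ε a) := rfl

@[simp] lemma flipAt_apply_self (a : ι) (ε : ι → Bool) : flipAt a ε a = !ε a := by
  simp [flipAt_apply]

@[simp] lemma flipAt_apply_of_ne {a i : ι} (h : i ≠ a) (ε : ι → Bool) : flipAt a ε i = ε i := by
  simp [flipAt_apply, h]

variable [Fintype ι] {E : Type*} [NormedAddCommGroup E] [InnerProductSpace ℝ E]

lemma sum_eq_zero_of_flipAt (a : ι) {F : (ι → Bool) → ℝ}
    (hF : ∀ ε, F (flipAt a ε) = -F ε) : ∑ ε, F ε = 0 := by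
  have h := Equiv.sum_comp (flipAt a) F
  simp only [hF, sum_neg_distrib] at h
  linarith

lemma sum_boolSign (i : ι) : ∑ ε : ι → Bool, boolSign (ε i) = 0 :=
  sum_eq_zero_of_flipAt i fun ε => by simp

lemma sum_boolSign_mul_boolSign (i j : ι) :
    ∑ ε : ι → Bool, boolSign (ε i) * boolSign (ε j) = if i = j then 2 ^ Fintype.card ι else 0 := by
  split_ifs with hij
  · simp [hij]
  · exact sum_eq_zero_of_flipAt i fun ε => by simp [Ne.symm hij]

lemma sum_norm_sq_sum_boolSign_smul (x : ι → E) :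
    ∑ ε : ι → Bool, ‖∑ i, boolSign (ε i) • x i‖ ^ 2 = 2 ^ Fintype.card ι * ∑ i, ‖x i‖ ^ 2 := by
  have expand : ∀ ε : ι → Bool, ‖∑ i, boolSign (ε i) • x i‖ ^ 2
      = ∑ i, ∑ j, boolSign (ε i) * boolSign (ε j) * inner ℝ (x j) (x i) := fun ε => by
    simp only [← real_inner_self_eq_norm_sq, sum_inner, inner_sum, real_inner_smul_left,
      real_inner_smul_right, mul_assoc]
  simp_rw [expand]
  rw [sum_comm]
  simp_rw [sum_comm (γ := ι → Bool), ← sum_mul, sum_boolSign_mul_boolSign, ite_mul, zero_mul,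
    sum_ite_eq, mem_univ, if_true, real_inner_self_eq_norm_sq, mul_sum]

lemma sum_norm_sum_boolSign_smul_le (x : ι → E) :
    ∑ ε : ι → Bool, ‖∑ i, boolSign (ε i) • x i‖ ≤ 2 ^ Fintype.card ι * √(∑ i, ‖x i‖ ^ 2) := by
  have hcs := sq_sum_le_card_mul_sum_sq (s := univ)
    (f := fun ε : ι → Bool => ‖∑ i, boolSign (ε i) • x i‖)
  rw [sum_norm_sq_sum_boolSign_smul, card_univ, Fintype.card_fun, Fintype.card_bool] at hcs
  push_cast at hcs
  rw [← Real.sqrt_sq (by positivity : (0 : ℝ) ≤ 2 ^ Fintype.card ι),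
    ← Real.sqrt_mul (by positivity)]
  exact Real.le_sqrt_of_sq_le (by linarith)

lemma sum_norm_sum_boolSign_smul_le_of_norm_le_one {x : ι → E} (hx : ∀ i, ‖x i‖ ≤ 1) :
    ∑ ε : ι → Bool, ‖∑ i, boolSign (ε i) • x i‖ ≤ 2 ^ Fintype.card ι * √(Fintype.card ι) := by
  refine (sum_norm_sum_boolSign_smul_le x).trans ?_
  gcongr
  calc ∑ i, ‖x i‖ ^ 2 ≤ ∑ _i : ι, (1 : ℝ) :=
        sum_le_sum fun i _ => pow_le_one₀ (norm_nonneg _) (hx i)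
    _ = Fintype.card ι := by simp

lemma sum_boolSign_mul_eq_add_sum_erase (ε : ι → Bool) (a : ι) (v : ι → ℝ) :
    ∑ i, boolSign (ε i) * v i
      = boolSign (ε a) * v a + ∑ i ∈ univ.erase a, boolSign (ε i) * v i :=
  (add_sum_erase _ _ (mem_univ a)).symm

lemma sum_boolSign_flipAt_mul_eq_add_sum_erase (ε : ι → Bool) (a : ι) (v : ι → ℝ) :
    ∑ i, boolSign (flipAt a ε i) * v i
      = -(boolSign (ε a) * v a) + ∑ i ∈ univ.erase a, boolSign (ε i) * v i := by
  rw [sum_boolSign_mul_eq_add_sum_erase _ a, flipAt_apply_self, boolSign_not, neg_mul]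
  congr 1
  exact sum_congr rfl fun i hi => by rw [flipAt_apply_of_ne (ne_of_mem_erase hi)]

end Signs

section RademacherSum

variable {T ι : Type*}

def CoordBounded (g : T → ι → ℝ) : Prop := ∀ i, ∃ C, ∀ t, |g t i| ≤ C

namespace CoordBounded

variable {g h : T → ι → ℝ}

lemma add (hg : CoordBounded g) (hh : CoordBounded h) : CoordBounded fun t i => g t i + h t i :=
  fun i => by
    obtain ⟨C, hC⟩ := hg i
    obtain ⟨D, hD⟩ := hh i
    exact ⟨C + D, fun t => (abs_add_le _ _).trans (add_le_add (hC t) (hD t))⟩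

lemma neg (hg : CoordBounded g) : CoordBounded fun t i => -g t i := by
  simpa [CoordBounded] using hg

lemma abs (hg : CoordBounded g) : CoordBounded fun t i => |g t i| := by
  simpa [CoordBounded] using hg

lemma comp_lipschitzWith (hg : CoordBounded g) {φ : ι → ℝ → ℝ} {L : NNReal}
    (hφ : ∀ i, LipschitzWith L (φ i)) : CoordBounded fun t i => φ i (g t i) := fun i => by
  obtain ⟨C, hC⟩ := hg i
  refine ⟨|φ i 0| + L * C, fun t => ?_⟩
  have hlip : |φ i (g t i) - φ i 0| ≤ L * |g t i| := by
    simpa [Real.dist_eq] using (hφ i).dist_le_mul (g t i) 0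
  calc |φ i (g t i)| ≤ |φ i 0| + |φ i (g t i) - φ i 0| := by
        linarith [abs_sub_abs_le_abs_sub (φ i (g t i)) (φ i 0)]
    _ ≤ |φ i 0| + L * C := by gcongr; exact hlip.trans (by gcongr; exact hC t)

lemma finset_inf' {κ : Type*} {g : κ → T → ι → ℝ} (hg : ∀ k, CoordBounded (g k)) {s : Finset κ}
    (hs : s.Nonempty) : CoordBounded fun t i => s.inf' hs fun k => g k t i := fun i => by
  choose C hC using fun k => hg k i
  refine ⟨s.sup' hs C, fun t => ?_⟩
  obtain ⟨k, hk, heq⟩ := s.exists_mem_eq_inf' hs fun k => g k t i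
  simp only [heq]
  exact (hC k t).trans (le_sup' C hk)

lemma bddAbove_sum_boolSign_mul [Fintype ι] (hg : CoordBounded g) (ε : ι → Bool) :
    BddAbove (Set.range fun t => ∑ i, boolSign (ε i) * g t i) := by
  choose C hC using hg
  refine ⟨∑ i, C i, Set.forall_mem_range.2 fun t => sum_le_sum fun i _ => ?_⟩
  calc boolSign (ε i) * g t i ≤ |boolSign (ε i) * g t i| := le_abs_self _
    _ ≤ C i := by rw [abs_mul, abs_boolSign, one_mul]; exact hC i t

end CoordBounded

lemma ciSup_sum_boolSign_mul_norm_sub_sq_le [Fintype ι] [Nonempty T] {E : Type*}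
    [NormedAddCommGroup E] [InnerProductSpace ℝ E] (x : ι → E) {u : T → E} {c : ℝ}
    (hu : ∀ t, ‖u t‖ ≤ c) (ε : ι → Bool) :
    ⨆ t, ∑ i, boolSign (ε i) * ‖x i - u t‖ ^ 2
      ≤ ∑ i, boolSign (ε i) * ‖x i‖ ^ 2
        + (2 * c * ‖∑ i, boolSign (ε i) • x i‖ + c ^ 2 * ‖∑ i, boolSign (ε i) • (1 : ℝ)‖) := by
  refine ciSup_le fun t => ?_
  set v := ∑ i, boolSign (ε i) • x i
  have hexpand : ∑ i, boolSign (ε i) * ‖x i - u t‖ ^ 2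
      = ∑ i, boolSign (ε i) * ‖x i‖ ^ 2 - 2 * inner ℝ v (u t)
        + (∑ i, boolSign (ε i)) * ‖u t‖ ^ 2 := by
    simp only [v, norm_sub_sq_real, sum_inner, real_inner_smul_left, mul_sum, sum_mul,
      ← sum_sub_distrib, ← sum_add_distrib]
    exact sum_congr rfl fun i _ => by ring
  have hinner : -(2 * inner ℝ v (u t)) ≤ 2 * c * ‖v‖ := by
    nlinarith [(abs_le.mp (abs_real_inner_le_norm v (u t))).1,
      mul_le_mul_of_nonneg_left (hu t) (norm_nonneg v)]
  have hconst : (∑ i, boolSign (ε i)) * ‖u t‖ ^ 2 ≤ c ^ 2 * ‖∑ i, boolSign (ε i) • (1 : ℝ)‖ := by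
    simp only [smul_eq_mul, mul_one, Real.norm_eq_abs]
    nlinarith [le_abs_self (∑ i, boolSign (ε i)), abs_nonneg (∑ i, boolSign (ε i)),
      pow_le_pow_left₀ (norm_nonneg _) (hu t) 2]
  linarith

variable [Fintype ι] [DecidableEq ι]

/-- `2 ^ card ι` times the empirical Rademacher complexity of the sample vectors `g t`, without the
factor `2 / card ι`. Real `⨆` is `0` on families unbounded above, hence the `CoordBounded`
hypotheses below. -/
noncomputable def rademacherSum (g : T → ι → ℝ) : ℝ :=
  ∑ ε : ι → Bool, ⨆ t, ∑ i, boolSign (ε i) * g t i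

lemma rademacherSum_neg (g : T → ι → ℝ) : rademacherSum (fun t i => -g t i) = rademacherSum g := by
  refine Fintype.sum_bijective (fun (ε : ι → Bool) i => !ε i)
    (Function.Involutive.bijective fun ε => by simp) _ _ fun ε => ?_
  simp

lemma rademacherSum_const_mul {r : ℝ} (hr : 0 ≤ r) (g : T → ι → ℝ) :
    rademacherSum (fun t i => r * g t i) = r * rademacherSum g := by
  simp only [rademacherSum, mul_sum, Real.mul_iSup_of_nonneg hr, mul_left_comm r]

variable [Nonempty T]

lemma rademacherSum_add_le {g h : T → ι → ℝ} (hg : CoordBounded g) (hh : CoordBounded h) :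
    rademacherSum (fun t i => g t i + h t i) ≤ rademacherSum g + rademacherSum h := by
  rw [rademacherSum, rademacherSum, rademacherSum, ← sum_add_distrib]
  refine sum_le_sum fun ε _ => ciSup_le fun t => ?_
  simp only [mul_add, sum_add_distrib]
  exact add_le_add (le_ciSup (hg.bddAbove_sum_boolSign_mul ε) t)
    (le_ciSup (hh.bddAbove_sum_boolSign_mul ε) t)

lemma ciSup_add_ciSup_neg_le_of_sub_le_abs {A B R : T → ℝ} (hAB : ∀ t s, A t - A s ≤ |B t - B s|)
    (hB : BddAbove (Set.range fun t => B t + R t))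
    (hB' : BddAbove (Set.range fun t => -B t + R t)) :
    (⨆ t, A t + R t) + (⨆ t, -A t + R t) ≤ (⨆ t, B t + R t) + (⨆ t, -B t + R t) := by
  refine ciSup_add_ciSup_le fun t s => ?_
  rcases le_total (B s) (B t) with h | h
  · calc A t + R t + (-A s + R s) ≤ (B t + R t) + (-B s + R s) := by
          linarith [hAB t s, abs_of_nonneg (sub_nonneg.2 h)]
      _ ≤ _ := add_le_add (le_ciSup hB t) (le_ciSup hB' s)
  · calc A t + R t + (-A s + R s) ≤ (B s + R s) + (-B t + R t) := by
          linarith [hAB t s, abs_of_nonpos (sub_nonpos.2 h)]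
      _ ≤ _ := add_le_add (le_ciSup hB s) (le_ciSup hB' t)

lemma rademacherSum_update_le {g : T → ι → ℝ} (hg : CoordBounded g) (a : ι) {φ : ℝ → ℝ}
    (hφ : LipschitzWith 1 φ) :
    rademacherSum (fun t => Function.update (g t) a (φ (g t a))) ≤ rademacherSum g := by
  set h := fun t => Function.update (g t) a (φ (g t a))
  -- Between a sign pattern and its flip at `a` only the sign of the `a`-th term changes.
  have hpair : ∀ ε : ι → Bool,
      (⨆ t, ∑ i, boolSign (ε i) * h t i) + (⨆ t, ∑ i, boolSign (flipAt a ε i) * h t i)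
        ≤ (⨆ t, ∑ i, boolSign (ε i) * g t i) + (⨆ t, ∑ i, boolSign (flipAt a ε i) * g t i) := by
    intro ε
    have hrest : ∀ t, ∑ i ∈ univ.erase a, boolSign (ε i) * h t i
        = ∑ i ∈ univ.erase a, boolSign (ε i) * g t i := fun t =>
      sum_congr rfl fun i hi => by simp [h, Function.update_of_ne (ne_of_mem_erase hi)]
    have hB := hg.bddAbove_sum_boolSign_mul ε
    have hB' := hg.bddAbove_sum_boolSign_mul (flipAt a ε)
    simp only [sum_boolSign_flipAt_mul_eq_add_sum_erase ε a,
      sum_boolSign_mul_eq_add_sum_erase ε a] at hB hB' ⊢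
    simp only [hrest, h, Function.update_self]
    refine ciSup_add_ciSup_neg_le_of_sub_le_abs (fun t s => ?_) hB hB'
    rw [← mul_sub, ← mul_sub, abs_mul, abs_boolSign, one_mul]
    calc boolSign (ε a) * (φ (g t a) - φ (g s a))
        ≤ |boolSign (ε a) * (φ (g t a) - φ (g s a))| := le_abs_self _
      _ = |φ (g t a) - φ (g s a)| := by rw [abs_mul, abs_boolSign, one_mul]
      _ ≤ |g t a - g s a| := by simpa [Real.dist_eq] using hφ.dist_le_mul (g t a) (g s a)
  have hsum := sum_le_sum fun ε (_ : ε ∈ univ) => hpair ε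
  simp only [sum_add_distrib, Equiv.sum_comp (flipAt a)
    (fun ε => ⨆ t, ∑ i, boolSign (ε i) * h t i),
    Equiv.sum_comp (flipAt a) (fun ε => ⨆ t, ∑ i, boolSign (ε i) * g t i)] at hsum
  unfold rademacherSum
  linarith

lemma rademacherSum_comp_le {g : T → ι → ℝ} (hg : CoordBounded g) {φ : ι → ℝ → ℝ}
    (hφ : ∀ i, LipschitzWith 1 (φ i)) :
    rademacherSum (fun t i => φ i (g t i)) ≤ rademacherSum g := by
  suffices ∀ S : Finset ι,
      rademacherSum (fun t i => (if i ∈ S then φ i else id) (g t i)) ≤ rademacherSum g by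
    simpa using this univ
  intro S
  induction S using Finset.induction_on with
  | empty => simp
  | insert a S ha ih =>
    set gS := fun t i => (if i ∈ S then φ i else id) (g t i)
    have hgS : CoordBounded gS :=
      hg.comp_lipschitzWith fun i => by split_ifs; exacts [hφ i, LipschitzWith.id]
    calc _ = rademacherSum (fun t => Function.update (gS t) a (φ a (gS t a))) := by
          congr! 2 with t
          funext i
          rcases eq_or_ne i a with rfl | hia
          · simp [gS, ha]
          · simp [gS, hia]
      _ ≤ rademacherSum gS := rademacherSum_update_le hgS a (hφ a)
      _ ≤ _ := ih

lemma rademacherSum_min_le {u v : T → ι → ℝ} (hu : CoordBounded u) (hv : CoordBounded v) :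
    rademacherSum (fun t i => min (u t i) (v t i)) ≤ rademacherSum u + rademacherSum v := by
  have huv : CoordBounded fun t i => u t i - v t i := by simpa [sub_eq_add_neg] using hu.add hv.neg
  have hsub : rademacherSum (fun t i => u t i - v t i) ≤ rademacherSum u + rademacherSum v := by
    simpa [sub_eq_add_neg, rademacherSum_neg] using rademacherSum_add_le hu hv.neg
  have habs : rademacherSum (fun t i => |u t i - v t i|) ≤ rademacherSum fun t i => u t i - v t i :=
    rademacherSum_comp_le huv fun _ => lipschitzWith_one_norm
  have htwice : rademacherSum (fun t i => u t i + v t i + -|u t i - v t i|)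
      ≤ rademacherSum (fun t i => u t i + v t i) + rademacherSum fun t i => |u t i - v t i| := by
    simpa [rademacherSum_neg] using rademacherSum_add_le (hu.add hv) huv.abs.neg
  have hmin : (fun t i => min (u t i) (v t i))
      = fun t i => (1 / 2 : ℝ) * (u t i + v t i + -|u t i - v t i|) := by
    funext t i
    rcases le_total (u t i) (v t i) with h | h
    · rw [min_eq_left h, abs_of_nonpos (sub_nonpos.2 h)]; ring
    · rw [min_eq_right h, abs_of_nonneg (sub_nonneg.2 h)]; ring
  rw [hmin, rademacherSum_const_mul (by norm_num)]
  linarith [rademacherSum_add_le hu hv]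

lemma rademacherSum_inf'_le {κ : Type*} {g : κ → T → ι → ℝ} (hg : ∀ k, CoordBounded (g k))
    {s : Finset κ} (hs : s.Nonempty) :
    rademacherSum (fun t i => s.inf' hs fun k => g k t i) ≤ ∑ k ∈ s, rademacherSum (g k) := by
  induction hs using Finset.Nonempty.cons_induction with
  | singleton k => simp
  | cons k s hks hs ih =>
    simp only [inf'_cons hs, sum_cons]
    linarith [rademacherSum_min_le (hg k) (CoordBounded.finset_inf' hg hs)]

lemma rademacherSum_iInf_le {κ : Type*} [Fintype κ] {g : κ → T → ι → ℝ}
    (hg : ∀ k, CoordBounded (g k)) :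
    rademacherSum (fun t i => ⨅ k, g k t i) ≤ ∑ k, rademacherSum (g k) := by
  cases isEmpty_or_nonempty κ
  · simp [rademacherSum]
  · simpa only [← inf'_univ_eq_ciInf] using rademacherSum_inf'_le hg univ_nonempty

variable {E : Type*} [NormedAddCommGroup E] [InnerProductSpace ℝ E]

lemma rademacherSum_norm_sub_sq_le {x : ι → E} (hx : ∀ i, ‖x i‖ ≤ 1) {u : T → E} {c : ℝ}
    (hu : ∀ t, ‖u t‖ ≤ c) :
    rademacherSum (fun t i => ‖x i - u t‖ ^ 2)
      ≤ 2 ^ Fintype.card ι * ((2 * c + c ^ 2) * √(Fintype.card ι)) := by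
  have hc : 0 ≤ c := (norm_nonneg _).trans (hu (Classical.arbitrary T))
  have hcentered : ∑ ε : ι → Bool, ∑ i, boolSign (ε i) * ‖x i‖ ^ 2 = 0 := by
    rw [sum_comm]
    exact sum_eq_zero fun i _ => by rw [← sum_mul, sum_boolSign, zero_mul]
  have hx_sum := sum_norm_sum_boolSign_smul_le_of_norm_le_one hx
  have hone_sum := sum_norm_sum_boolSign_smul_le_of_norm_le_one fun _ : ι => (norm_one (α := ℝ)).le
  calc rademacherSum (fun t i => ‖x i - u t‖ ^ 2)
      ≤ ∑ ε : ι → Bool, (∑ i, boolSign (ε i) * ‖x i‖ ^ 2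
        + (2 * c * ‖∑ i, boolSign (ε i) • x i‖ + c ^ 2 * ‖∑ i, boolSign (ε i) • (1 : ℝ)‖)) :=
        sum_le_sum fun ε _ => ciSup_sum_boolSign_mul_norm_sub_sq_le x hu ε
    _ = 2 * c * ∑ ε : ι → Bool, ‖∑ i, boolSign (ε i) • x i‖
        + c ^ 2 * ∑ ε : ι → Bool, ‖∑ i, boolSign (ε i) • (1 : ℝ)‖ := by
        rw [sum_add_distrib, hcentered, sum_add_distrib, ← mul_sum, ← mul_sum, zero_add]
    _ ≤ 2 * c * (2 ^ Fintype.card ι * √(Fintype.card ι))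
        + c ^ 2 * (2 ^ Fintype.card ι * √(Fintype.card ι)) := by gcongr
    _ = _ := by ring

lemma rademacherSum_iInf_norm_sub_sq_le {κ : Type*} [Fintype κ] {x : ι → E}
    (hx : ∀ i, ‖x i‖ ≤ 1) {p : T → κ → E} {c : ℝ} (hp : ∀ t k, ‖p t k‖ ≤ c) :
    rademacherSum (fun t i => ⨅ k, ‖x i - p t k‖ ^ 2)
      ≤ 2 ^ Fintype.card ι * (Fintype.card κ * ((2 * c + c ^ 2) * √(Fintype.card ι))) := by
  have hbdd : ∀ k, CoordBounded fun t i => ‖x i - p t k‖ ^ 2 := fun k i =>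
    ⟨(1 + c) ^ 2, fun t => by
      rw [abs_of_nonneg (by positivity)]
      exact pow_le_pow_left₀ (norm_nonneg _)
        ((norm_sub_le _ _).trans (add_le_add (hx i) (hp t k))) 2⟩
  calc _ ≤ ∑ k, rademacherSum fun t i => ‖x i - p t k‖ ^ 2 := rademacherSum_iInf_le hbdd
    _ ≤ ∑ _k : κ, 2 ^ Fintype.card ι * ((2 * c + c ^ 2) * √(Fintype.card ι)) :=
        sum_le_sum fun k _ => rademacherSum_norm_sub_sq_le hx fun t => hp t k
    _ = _ := by simp only [sum_const, card_univ, nsmul_eq_mul]; ring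

end RademacherSum

lemma rademacher_image_le {X T : Type*} [MeasurableSpace X] {μ : Measure X}
    [IsProbabilityMeasure μ] {m : ℕ} {f : T → X → ℝ} {S : Set T} {B : ℝ} (hB : 0 ≤ B)
    (h : ∀ᵐ x ∂Measure.pi fun _ : Fin m => μ,
      rademacherSum (fun (t : S) i => f t (x i)) ≤ 2 ^ m * B) :
    rademacher m (f '' S) μ ≤ 2 / m * B := by
  have hsum : ∀ x : Fin m → X, ∑ ε : Fin m → Bool,
      sSup ((fun g : X → ℝ => ∑ i, (if ε i then (1 : ℝ) else -1) * g (x i)) '' (f '' S))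
        = rademacherSum (fun (t : S) i => f t (x i)) := fun x =>
    sum_congr rfl fun ε _ => by rw [Set.image_image, sSup_image']; rfl
  unfold rademacher
  simp only [hsum]
  gcongr
  by_cases hint : Integrable
    (fun x : Fin m → X => rademacherSum (fun (t : S) i => f t (x i)) / 2 ^ m)
    (Measure.pi fun _ => μ)
  · calc _ ≤ ∫ _ : Fin m → X, B ∂Measure.pi fun _ => μ :=
          integral_mono_ae hint (integrable_const B) <| h.mono fun x hx => by
            rw [div_le_iff₀ (by positivity)]; linarith
      _ = B := by simp
  · rw [integral_undef hint]
    exact hB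

theorem stmt8_general {H : Type*} [NormedAddCommGroup H] [InnerProductSpace ℝ H]
    [MeasurableSpace H]
    {K m : ℕ}
    (μ : Measure H) [IsProbabilityMeasure μ] (hμ : ∀ᵐ x ∂μ, ‖x‖ ≤ 1)
    {c : ℝ} (hc : 1 ≤ c) :
    rademacher m
      ((fun T : EuclideanSpace ℝ (Fin K) →L[ℝ] H =>
          fun x : H =>
            sInf (Set.range fun k : Fin K => ‖x - T (EuclideanSpace.single k 1)‖ ^ 2)) ''
        {T | ∀ k, ‖T (EuclideanSpace.single k 1)‖ ≤ c}) μ ≤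
      c ^ 2 * K * Real.sqrt (18 * Real.pi / m) := by
  set S : Set (EuclideanSpace ℝ (Fin K) →L[ℝ] H) :=
    {T | ∀ k, ‖T (EuclideanSpace.single k 1)‖ ≤ c}
  have hc0 : 0 ≤ c := zero_le_one.trans hc
  have : Nonempty S := ⟨⟨0, fun k => by simpa using hc0⟩⟩
  have hB : (0 : ℝ) ≤ K * ((2 * c + c ^ 2) * √m) := by positivity
  have hconst : 2 * (2 * c + c ^ 2) ≤ c ^ 2 * √(18 * Real.pi) := by
    have h6 : 6 ≤ √(18 * Real.pi) :=
      (Real.le_sqrt (by norm_num) (by positivity)).2 (by nlinarith [Real.pi_gt_three])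
    nlinarith [mul_le_mul_of_nonneg_left h6 (sq_nonneg c)]
  refine (rademacher_image_le hB ?_).trans ?_
  · filter_upwards [ae_all_iff.2 fun i => (Measure.quasiMeasurePreserving_eval _ i).ae hμ]
      with x hx
    have h := rademacherSum_iInf_norm_sub_sq_le hx fun (T : S) k => T.2 k
    rwa [Fintype.card_fin, Fintype.card_fin] at h
  calc 2 / m * (K * ((2 * c + c ^ 2) * √m)) = K * (2 * (2 * c + c ^ 2)) / √m := by
        rw [div_eq_mul_one_div _ √(m : ℝ), ← Real.sqrt_div_self']
        ring
    _ ≤ K * (c ^ 2 * √(18 * Real.pi)) / √m := by gcongr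
    _ = _ := by rw [Real.sqrt_div' _ (Nat.cast_nonneg m)]; ring

theorem stmt8 {H : Type*} [NormedAddCommGroup H] [InnerProductSpace ℝ H]
    [MeasurableSpace H] [BorelSpace H]
    {K m : ℕ} (hK : 1 ≤ K) (hm : 1 ≤ m)
    (μ : Measure H) [IsProbabilityMeasure μ] (hμ : ∀ᵐ x ∂μ, ‖x‖ ≤ 1)
    {c : ℝ} (hc : 1 ≤ c) :
    rademacher m
      ((fun T : EuclideanSpace ℝ (Fin K) →L[ℝ] H =>
          fun x : H =>
            sInf (Set.range fun k : Fin K => ‖x - T (EuclideanSpace.single k 1)‖ ^ 2)) ''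
        {T | ∀ k, ‖T (EuclideanSpace.single k 1)‖ ≤ c}) μ ≤
      c ^ 2 * K * Real.sqrt (18 * Real.pi / m) :=
  stmt8_general μ hμ hc
end

section
/- Let μ be a probability measure supported on the unit ball of H and let D = { x ↦ ‖x‖² − ‖U U* x‖² : U ∈ 𝒰(ℝ^K, H) } be the class of reconstruction errors of K-dimensional principal component analysis. Then R_m(D, μ) ≤ 2 √(K/m). -/
open MeasureTheory

/-!
Fix a sample `x` and signs `σ`, and let `u_1, …, u_K` be the image under `U` of an orthonormal
basis of `ℝ^K`. Then
`Σ_i σ_i ‖U U* x_i‖² = Σ_i σ_i Σ_k ⟪x_i, u_k⟫² = ⟪Σ_i σ_i x_i ⊗ x_i, Σ_k u_k ⊗ u_k⟫` in `H ⊗ H`, and the `u_k ⊗ u_k` are orthonormal, so `Σ_k u_k ⊗ u_k` has norm `√K`. Hence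
the supremum over `U` is at most `Σ_i σ_i ‖x_i‖² + √K ‖Σ_i σ_i x_i ⊗ x_i‖`. The first term averages
to zero over the signs; for the second, Cauchy–Schwarz and the orthogonality of the signs give
`E_σ ‖Σ_i σ_i x_i ⊗ x_i‖ ≤ (Σ_i ‖x_i‖⁴)^{1/2} ≤ √m`.
-/

open Finset
open scoped RealInnerProductSpace TensorProduct

section RademacherSigns

variable {ι : Type*} [Fintype ι] [DecidableEq ι]

theorem sum_sign_mul_eq_zero (i : ι) (g : (ι → Bool) → ℝ)
    (hg : ∀ ε, g (Function.update ε i (!ε i)) = g ε) :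
    ∑ ε : ι → Bool, (if ε i then (1 : ℝ) else -1) * g ε = 0 := by
  -- flipping `ε i` permutes the sign patterns and negates the summand
  have hflip : Function.Involutive fun ε : ι → Bool => Function.update ε i (!ε i) := by
    intro ε; simp
  have h := Equiv.sum_comp (hflip.toPerm _) fun ε => (if ε i then (1 : ℝ) else -1) * g ε
  simp only [Function.Involutive.coe_toPerm, Function.update_self, hg] at h
  have hneg : ∀ ε : ι → Bool,
      (if (!ε i) = true then (1 : ℝ) else -1) * g ε = -((if ε i then (1 : ℝ) else -1) * g ε) := by
    intro ε; cases ε i <;> simp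
  simp only [hneg, sum_neg_distrib] at h
  linarith

theorem sum_sign_eq_zero (i : ι) : ∑ ε : ι → Bool, (if ε i then (1 : ℝ) else -1) = 0 := by
  simpa using sum_sign_mul_eq_zero i (fun _ => 1) fun _ => rfl

theorem sum_sign_mul_sign (i j : ι) :
    ∑ ε : ι → Bool, (if ε i then (1 : ℝ) else -1) * (if ε j then (1 : ℝ) else -1) =
      if i = j then 2 ^ Fintype.card ι else 0 := by
  split_ifs with hij
  · subst hij
    have hsq : ∀ ε : ι → Bool,
        (if ε i then (1 : ℝ) else -1) * (if ε i then (1 : ℝ) else -1) = 1 := by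
      intro ε; cases ε i <;> simp
    simp [hsq]
  · exact sum_sign_mul_eq_zero i _ fun ε => by simp [Function.update_of_ne (Ne.symm hij)]

variable {E : Type*} [NormedAddCommGroup E] [InnerProductSpace ℝ E]

theorem sum_norm_sq_sum_sign_smul (y : ι → E) :
    ∑ ε : ι → Bool, ‖∑ i, (if ε i then (1 : ℝ) else -1) • y i‖ ^ 2 =
      2 ^ Fintype.card ι * ∑ i, ‖y i‖ ^ 2 := by
  calc ∑ ε : ι → Bool, ‖∑ i, (if ε i then (1 : ℝ) else -1) • y i‖ ^ 2
      = ∑ i, ∑ j, (∑ ε : ι → Bool,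
          (if ε i then (1 : ℝ) else -1) * (if ε j then (1 : ℝ) else -1)) * ⟪y i, y j⟫ := by
        simp_rw [← real_inner_self_eq_norm_sq, sum_inner, inner_sum, real_inner_smul_left,
          real_inner_smul_right, sum_mul]
        rw [sum_comm]
        refine sum_congr rfl fun i _ => ?_
        rw [sum_comm]
        refine sum_congr rfl fun j _ => sum_congr rfl fun ε _ => by ring
    _ = 2 ^ Fintype.card ι * ∑ i, ‖y i‖ ^ 2 := by
        simp_rw [sum_sign_mul_sign, ite_mul, zero_mul, sum_ite_eq, mem_univ, if_true,
          real_inner_self_eq_norm_sq, mul_sum]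

theorem sum_norm_sum_sign_smul_le (y : ι → E) :
    ∑ ε : ι → Bool, ‖∑ i, (if ε i then (1 : ℝ) else -1) • y i‖ ≤
      2 ^ Fintype.card ι * √(∑ i, ‖y i‖ ^ 2) := by
  have hcs := sq_sum_le_card_mul_sum_sq (s := (univ : Finset (ι → Bool)))
    (f := fun ε => ‖∑ i, (if ε i then (1 : ℝ) else -1) • y i‖)
  simp only [card_univ, Fintype.card_fun, Fintype.card_bool, Nat.cast_pow, Nat.cast_ofNat,
    sum_norm_sq_sum_sign_smul] at hcs
  rw [← pow_le_pow_iff_left₀ (by positivity) (by positivity) two_ne_zero]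
  calc _ ≤ _ := hcs
    _ = (2 ^ Fintype.card ι * √(∑ i, ‖y i‖ ^ 2)) ^ 2 := by
      rw [mul_pow, Real.sq_sqrt (by positivity)]; ring

end RademacherSigns

theorem norm_sum_tmul_self_of_orthonormal {ι F : Type*} [Fintype ι] [NormedAddCommGroup F]
    [InnerProductSpace ℝ F] {u : ι → F}
    (hu : Orthonormal ℝ u) : ‖∑ k, u k ⊗ₜ[ℝ] u k‖ = √(Fintype.card ι) := by
  have hdiag : Orthonormal ℝ fun k => u k ⊗ₜ[ℝ] u k :=
    (hu.tmul hu).comp (fun k => (k, k)) fun k l h => congrArg Prod.fst h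
  have h := hdiag.inner_sum 1 1 univ
  simp only [Pi.one_apply, one_smul, conj_trivial, mul_one, sum_const, card_univ,
    nsmul_eq_mul, real_inner_self_eq_norm_sq] at h
  rw [← h, Real.sqrt_sq (norm_nonneg _)]

section PrincipalComponents

variable {E H : Type*} [NormedAddCommGroup E] [InnerProductSpace ℝ E] [FiniteDimensional ℝ E]
  [NormedAddCommGroup H] [InnerProductSpace ℝ H] [CompleteSpace H]

noncomputable def reconstructionError (U : E →ₗᵢ[ℝ] H) (x : H) : ℝ :=
  ‖x‖ ^ 2 - ‖U.toContinuousLinearMap (ContinuousLinearMap.adjoint U.toContinuousLinearMap x)‖ ^ 2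

theorem norm_sq_map_adjoint_eq_sum_sq_inner {ι : Type*} [Fintype ι] (U : E →ₗᵢ[ℝ] H)
    (b : OrthonormalBasis ι ℝ E) (x : H) :
    ‖U.toContinuousLinearMap (ContinuousLinearMap.adjoint U.toContinuousLinearMap x)‖ ^ 2 =
      ∑ k, ⟪x, U (b k)⟫ ^ 2 := by
  rw [LinearIsometry.coe_toContinuousLinearMap, U.norm_map, ← b.sum_sq_inner_left]
  simp_rw [ContinuousLinearMap.adjoint_inner_left]
  rfl

theorem abs_sum_mul_norm_sq_map_adjoint_le {ι : Type*} [Fintype ι] (U : E →ₗᵢ[ℝ] H)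
    (s : ι → ℝ) (x : ι → H) :
    |∑ i, s i * ‖U.toContinuousLinearMap
        (ContinuousLinearMap.adjoint U.toContinuousLinearMap (x i))‖ ^ 2| ≤
      √(Module.finrank ℝ E) * ‖∑ i, s i • x i ⊗ₜ[ℝ] x i‖ := by
  set b := stdOrthonormalBasis ℝ E
  have hu : Orthonormal ℝ fun k => U (b k) := b.orthonormal.comp_linearIsometry U
  have hinner : ∑ i, s i * ‖U.toContinuousLinearMap
        (ContinuousLinearMap.adjoint U.toContinuousLinearMap (x i))‖ ^ 2 =
      ⟪∑ i, s i • x i ⊗ₜ[ℝ] x i, ∑ k, U (b k) ⊗ₜ[ℝ] U (b k)⟫ := by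
    simp_rw [norm_sq_map_adjoint_eq_sum_sq_inner U b, sum_inner, mul_sum]
    refine sum_congr rfl fun i _ => ?_
    rw [inner_sum]
    refine sum_congr rfl fun k _ => ?_
    rw [real_inner_smul_left (x i ⊗ₜ[ℝ] x i), TensorProduct.inner_tmul, sq]
  have hnorm : ‖∑ k, U (b k) ⊗ₜ[ℝ] U (b k)‖ = √(Module.finrank ℝ E) := by
    rw [norm_sum_tmul_self_of_orthonormal hu, Fintype.card_fin]
  rw [hinner, ← hnorm, mul_comm]
  exact abs_real_inner_le_norm (∑ i, s i • x i ⊗ₜ[ℝ] x i) _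

theorem sSup_sum_mul_reconstructionError_le {ι : Type*} [Fintype ι] [Nonempty (E →ₗᵢ[ℝ] H)]
    (s : ι → ℝ) (x : ι → H) :
    sSup ((fun f : H → ℝ => ∑ i, s i * f (x i)) '' Set.range (reconstructionError (E := E))) ≤
      ∑ i, s i * ‖x i‖ ^ 2 + √(Module.finrank ℝ E) * ‖∑ i, s i • x i ⊗ₜ[ℝ] x i‖ := by
  rw [← Set.range_comp]
  refine csSup_le (Set.range_nonempty _) ?_
  rintro _ ⟨U, rfl⟩
  simp only [Function.comp, reconstructionError, mul_sub, sum_sub_distrib]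
  linarith [neg_le_of_abs_le (abs_sum_mul_norm_sq_map_adjoint_le U s x)]

theorem sum_sSup_sum_sign_mul_reconstructionError_le {ι : Type*} [Fintype ι] [DecidableEq ι]
    [Nonempty (E →ₗᵢ[ℝ] H)] (x : ι → H) (hx : ∀ i, ‖x i‖ ≤ 1) :
    ∑ ε : ι → Bool, sSup ((fun f : H → ℝ => ∑ i, (if ε i then (1 : ℝ) else -1) * f (x i)) ''
        Set.range (reconstructionError (E := E))) ≤
      2 ^ Fintype.card ι * (√(Module.finrank ℝ E) * √(Fintype.card ι)) := by
  have hsq : ∑ i, ‖x i ⊗ₜ[ℝ] x i‖ ^ 2 ≤ Fintype.card ι := by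
    calc ∑ i, ‖x i ⊗ₜ[ℝ] x i‖ ^ 2 ≤ ∑ _i : ι, (1 : ℝ) := sum_le_sum fun i _ => by
          rw [TensorProduct.norm_tmul]
          exact pow_le_one₀ (by positivity) (mul_le_one₀ (hx i) (norm_nonneg _) (hx i))
      _ = Fintype.card ι := by simp
  calc _ ≤ ∑ ε : ι → Bool, (∑ i, (if ε i then (1 : ℝ) else -1) * ‖x i‖ ^ 2 +
        √(Module.finrank ℝ E) * ‖∑ i, (if ε i then (1 : ℝ) else -1) • x i ⊗ₜ[ℝ] x i‖) :=
        sum_le_sum fun ε _ => sSup_sum_mul_reconstructionError_le _ x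
    _ = √(Module.finrank ℝ E) *
          ∑ ε : ι → Bool, ‖∑ i, (if ε i then (1 : ℝ) else -1) • x i ⊗ₜ[ℝ] x i‖ := by
        have hlin : ∑ ε : ι → Bool, ∑ i, (if ε i then (1 : ℝ) else -1) * ‖x i‖ ^ 2 = 0 := by
          rw [sum_comm]
          simp_rw [← sum_mul, sum_sign_eq_zero, zero_mul, sum_const_zero]
        rw [sum_add_distrib, hlin, zero_add, mul_sum]
    _ ≤ √(Module.finrank ℝ E) * (2 ^ Fintype.card ι * √(Fintype.card ι)) := by
        gcongr
        exact (sum_norm_sum_sign_smul_le _).trans (by gcongr)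
    _ = _ := by ring

end PrincipalComponents

section Rademacher

variable {X : Type*} [MeasurableSpace X]

theorem rademacher_empty (m : ℕ) (μ : Measure X) : rademacher m ∅ μ = 0 := by
  simp [rademacher]

theorem rademacher_le_of_ae_sum_le {m : ℕ} {F : Set (X → ℝ)} {μ : Measure X}
    [IsProbabilityMeasure μ] {C : ℝ} (hC : 0 ≤ C)
    (h : ∀ᵐ x ∂(Measure.pi fun _ : Fin m => μ), ∑ ε : Fin m → Bool,
      sSup ((fun f : X → ℝ => ∑ i, (if ε i then (1 : ℝ) else -1) * f (x i)) '' F) ≤ 2 ^ m * C) :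
    rademacher m F μ ≤ 2 / m * C := by
  unfold rademacher
  gcongr
  have hle := h.mono fun x hx => (div_le_iff₀' (by positivity)).mpr hx
  by_cases hint : Integrable (fun x : Fin m → X => (∑ ε : Fin m → Bool,
      sSup ((fun f : X → ℝ => ∑ i, (if ε i then (1 : ℝ) else -1) * f (x i)) '' F)) / 2 ^ m)
      (Measure.pi fun _ => μ)
  · simpa using integral_mono_ae hint (integrable_const C) hle
  · rw [integral_undef hint]
    exact hC

end Rademacher

theorem stmt12_general {H : Type*} [NormedAddCommGroup H] [InnerProductSpace ℝ H] [CompleteSpace H]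
    [MeasurableSpace H]
    {K m : ℕ}
    (μ : Measure H) [IsProbabilityMeasure μ] (hμ : ∀ᵐ x ∂μ, ‖x‖ ≤ 1) :
    rademacher m
      ((fun U : EuclideanSpace ℝ (Fin K) →ₗᵢ[ℝ] H =>
          fun x : H => ‖x‖ ^ 2 -
            ‖U.toContinuousLinearMap
              (ContinuousLinearMap.adjoint U.toContinuousLinearMap x)‖ ^ 2) '' Set.univ) μ ≤
      2 * Real.sqrt (K / m) := by
  rw [Set.image_univ]
  rcases isEmpty_or_nonempty (EuclideanSpace ℝ (Fin K) →ₗᵢ[ℝ] H) with hempty | hnonempty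
  · rw [Set.range_eq_empty, rademacher_empty]
    positivity
  have hsample : ∀ᵐ x ∂(Measure.pi fun _ : Fin m => μ), ∀ i, ‖x i‖ ≤ 1 :=
    (Filter.eventually_pi fun _ => hμ).filter_mono Measure.ae_pi_le_pi
  calc _ ≤ 2 / m * (√K * √m) := rademacher_le_of_ae_sum_le (by positivity) <|
        hsample.mono fun x hx => by
          have := sum_sSup_sum_sign_mul_reconstructionError_le (E := EuclideanSpace ℝ (Fin K)) x hx
          rwa [Fintype.card_fin, finrank_euclideanSpace_fin] at this
    _ = 2 * √(K / m) := by
      rw [Real.sqrt_div' _ (Nat.cast_nonneg m), div_eq_mul_one_div (√(K : ℝ)),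
        ← Real.sqrt_div_self']
      ring

theorem stmt12 {H : Type*} [NormedAddCommGroup H] [InnerProductSpace ℝ H] [CompleteSpace H]
    [MeasurableSpace H] [BorelSpace H]
    {K m : ℕ} (hK : 1 ≤ K) (hm : 1 ≤ m)
    (μ : Measure H) [IsProbabilityMeasure μ] (hμ : ∀ᵐ x ∂μ, ‖x‖ ≤ 1) :
    rademacher m
      ((fun U : EuclideanSpace ℝ (Fin K) →ₗᵢ[ℝ] H =>
          fun x : H => ‖x‖ ^ 2 -
            ‖U.toContinuousLinearMap
              (ContinuousLinearMap.adjoint U.toContinuousLinearMap x)‖ ^ 2) '' Set.univ) μ ≤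
      2 * Real.sqrt (K / m) :=
  stmt12_general μ hμ
end

section
/- Let x ∈ H with ‖x‖ ≤ 1, let c₁, …, c_K ∈ H with ‖c_k‖ = 1 for all k and ⟨c_k, c_l⟩ ≥ 0 for all k, l, and let y ∈ ℝ^K with y_k ≥ 0 for all k. If y minimizes the function h(y) = ‖x − Σ_{k=1}^K y_k c_k‖² over the set of vectors in ℝ^K with nonnegative coordinates, then ‖y‖ ≤ 1. -/
/-!
Write `s = ∑ k, y k • c k`. Rescaling `y` by `t ≥ 0` stays feasible, so `t = 1` minimizes
`‖x - t • s‖²` over `t ≥ 0`; comparing with the unconstrained minimizer `t = ⟪x, s⟫ / ‖s‖²` forces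
`⟪x, s⟫ = ‖s‖²`, whence `‖s‖ ≤ ‖x‖ ≤ 1` by Cauchy–Schwarz. On the other hand the Gram matrix of the
unit vectors `c k` has unit diagonal and nonnegative entries, so `‖s‖² ≥ ∑ k, (y k)² = ‖y‖²`.
-/

open RealInnerProductSpace

section Ray

variable {H : Type*} [NormedAddCommGroup H] [InnerProductSpace ℝ H]

lemma inner_eq_norm_sq_of_forall_norm_sub_smul_sq_le {x s : H}
    (h : ∀ t : ℝ, 0 ≤ t → ‖x - s‖ ^ 2 ≤ ‖x - t • s‖ ^ 2) : ⟪x, s⟫ = ‖s‖ ^ 2 := by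
  have expand : ∀ t : ℝ, 0 ≤ t →
      ‖x‖ ^ 2 - 2 * ⟪x, s⟫ + ‖s‖ ^ 2 ≤ ‖x‖ ^ 2 - 2 * (t * ⟪x, s⟫) + t ^ 2 * ‖s‖ ^ 2 := by
    intro t ht
    have := h t ht
    rwa [norm_sub_sq_real, norm_sub_sq_real, real_inner_smul_right, norm_smul, Real.norm_eq_abs,
      mul_pow, sq_abs] at this
  rcases eq_or_ne s 0 with rfl | hs0
  · simp
  · have hs : 0 < ‖s‖ ^ 2 := by positivity
    have ha : 0 ≤ ⟪x, s⟫ := by nlinarith [expand 0 le_rfl]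
    set t := ⟪x, s⟫ / ‖s‖ ^ 2
    have hat : ⟪x, s⟫ = t * ‖s‖ ^ 2 := (div_mul_cancel₀ _ hs.ne').symm
    have hmin := expand t (div_nonneg ha hs.le)
    rw [hat] at hmin ⊢
    have ht : (t - 1) ^ 2 * ‖s‖ ^ 2 ≤ 0 := by nlinarith
    have ht1 : t = 1 := by
      nlinarith [nonpos_of_mul_nonpos_left ht hs, sq_nonneg (t - 1)]
    rw [ht1, one_mul]

lemma norm_le_of_forall_norm_sub_smul_sq_le {x s : H}
    (h : ∀ t : ℝ, 0 ≤ t → ‖x - s‖ ^ 2 ≤ ‖x - t • s‖ ^ 2) : ‖s‖ ≤ ‖x‖ := by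
  have hcs : ‖s‖ ^ 2 ≤ ‖x‖ * ‖s‖ :=
    (inner_eq_norm_sq_of_forall_norm_sub_smul_sq_le h).symm.le.trans (real_inner_le_norm x s)
  nlinarith [norm_nonneg s, norm_nonneg x]

end Ray

section Gram

variable {H ι : Type*} [NormedAddCommGroup H] [InnerProductSpace ℝ H] [Fintype ι]

lemma norm_sum_smul_sq_eq_sum_sum (y : ι → ℝ) (c : ι → H) :
    ‖∑ k, y k • c k‖ ^ 2 = ∑ k, ∑ l, y k * y l * ⟪c k, c l⟫ := by
  rw [← real_inner_self_eq_norm_sq, sum_inner]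
  refine Finset.sum_congr rfl fun k _ => ?_
  rw [inner_sum]
  refine Finset.sum_congr rfl fun l _ => ?_
  rw [real_inner_smul_left, real_inner_smul_right, mul_assoc]

lemma norm_le_norm_sum_smul {y : EuclideanSpace ℝ ι} (hy : ∀ k, 0 ≤ y k) {c : ι → H}
    (hc : ∀ k, ‖c k‖ = 1) (hcc : ∀ k l, 0 ≤ ⟪c k, c l⟫) : ‖y‖ ≤ ‖∑ k, y k • c k‖ := by
  refine (pow_le_pow_iff_left₀ (norm_nonneg _) (norm_nonneg _) two_ne_zero).mp ?_
  rw [EuclideanSpace.norm_sq_eq, norm_sum_smul_sq_eq_sum_sum]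
  refine Finset.sum_le_sum fun k _ => ?_
  have hdiag : ‖y k‖ ^ 2 = y k * y k * ⟪c k, c k⟫ := by
    rw [real_inner_self_eq_norm_sq, hc k, Real.norm_eq_abs, sq_abs]; ring
  rw [hdiag]
  exact Finset.single_le_sum (fun l _ => mul_nonneg (mul_nonneg (hy k) (hy l)) (hcc k l))
    (Finset.mem_univ k)

end Gram

theorem stmt13_general {H : Type*} [NormedAddCommGroup H] [InnerProductSpace ℝ H]
    {K : ℕ}
    (x : H) (hx : ‖x‖ ≤ 1)
    (c : Fin K → H) (hc : ∀ k, ‖c k‖ = 1) (hcc : ∀ k l, 0 ≤ ⟪c k, c l⟫)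
    (y : EuclideanSpace ℝ (Fin K)) (hy : ∀ k, 0 ≤ y k)
    (hmin : ∀ z : EuclideanSpace ℝ (Fin K), (∀ k, 0 ≤ z k) →
      ‖x - ∑ k, y k • c k‖ ^ 2 ≤ ‖x - ∑ k, z k • c k‖ ^ 2) :
    ‖y‖ ≤ 1 := by
  have hray : ∀ t : ℝ, 0 ≤ t → ‖x - ∑ k, y k • c k‖ ^ 2 ≤ ‖x - t • ∑ k, y k • c k‖ ^ 2 := by
    intro t ht
    have hscale : ∑ k, (t * y k) • c k = t • ∑ k, y k • c k := by
      simp only [Finset.smul_sum, mul_smul]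
    simpa only [← hscale] using hmin (WithLp.toLp 2 fun k => t * y k) fun k => mul_nonneg ht (hy k)
  calc ‖y‖ ≤ ‖∑ k, y k • c k‖ := norm_le_norm_sum_smul hy hc hcc
    _ ≤ ‖x‖ := norm_le_of_forall_norm_sub_smul_sq_le hray
    _ ≤ 1 := hx

theorem stmt13 {H : Type*} [NormedAddCommGroup H] [InnerProductSpace ℝ H]
    {K : ℕ} (hK : 1 ≤ K)
    (x : H) (hx : ‖x‖ ≤ 1)
    (c : Fin K → H) (hc : ∀ k, ‖c k‖ = 1) (hcc : ∀ k l, 0 ≤ ⟪c k, c l⟫)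
    (y : EuclideanSpace ℝ (Fin K)) (hy : ∀ k, 0 ≤ y k)
    (hmin : ∀ z : EuclideanSpace ℝ (Fin K), (∀ k, 0 ≤ z k) →
      ‖x - ∑ k, y k • c k‖ ^ 2 ≤ ‖x - ∑ k, z k • c k‖ ^ 2) :
    ‖y‖ ≤ 1 :=
  stmt13_general x hx c hc hcc y hy hmin
end

section
/- Let Y be a nonempty closed subset of the unit ball of ℝ^K, let (e_k)_{k=1}^K be the canonical orthonormal basis of ℝ^K, let T₁, T₂ : ℝ^K → H be bounded linear maps, and let x ∈ H with ‖x‖ ≤ 1. Then ( inf_{y ∈ Y} ‖x − T₁ y‖² − inf_{y ∈ Y} ‖x − T₂ y‖² )² ≤ 8 Σ_{k=1}^K ( ⟨x, T₁ e_k⟩ − ⟨x, T₂ e_k⟩ )² + 2 Σ_{k,l=1}^K ( ⟨T₁ e_k, T₁ e_l⟩ − ⟨T₂ e_k, T₂ e_l⟩ )². -/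
/-!
Expanding the squares, `‖x - T₁ y‖² - ‖x - T₂ y‖² = -2 φ(y) + B(y, y)` with the linear form
`φ = ⟪x, (T₁ - T₂) ·⟫` and the bilinear form `B = ⟪T₁ ·, T₁ ·⟫ - ⟪T₂ ·, T₂ ·⟫`. Cauchy–Schwarz in
coordinates bounds `φ(y)²` and `B(y, y)²` by the Hilbert–Schmidt sums of the statement when
`‖y‖ ≤ 1`, and `(2u + v)² ≤ 8u² + 2v²`. A uniform bound on the difference of two functions bounds
the difference of their infima.
-/

open RealInnerProductSpace

namespace EuclideanSpace

variable {ι : Type*} [Fintype ι] [DecidableEq ι]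

theorem sq_linearMap_apply_le (φ : EuclideanSpace ℝ ι →ₗ[ℝ] ℝ) (y : EuclideanSpace ℝ ι) :
    φ y ^ 2 ≤ ‖y‖ ^ 2 * ∑ k, φ (single k 1) ^ 2 := by
  have hφ : φ y = ∑ k, y k * φ (single k 1) := by
    conv_lhs => rw [← (basisFun ι ℝ).sum_repr y]
    simp [map_sum]
  rw [hφ, norm_sq_eq]
  simpa using Finset.sum_mul_sq_le_sq_mul_sq Finset.univ (fun k => y k) _

theorem sq_bilin_apply_self_le
    (B : EuclideanSpace ℝ ι →ₗ[ℝ] EuclideanSpace ℝ ι →ₗ[ℝ] ℝ) (y : EuclideanSpace ℝ ι) :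
    B y y ^ 2 ≤ ‖y‖ ^ 4 * ∑ k, ∑ l, B (single k 1) (single l 1) ^ 2 :=
  calc B y y ^ 2 ≤ ‖y‖ ^ 2 * ∑ l, B y (single l 1) ^ 2 := sq_linearMap_apply_le (B y) y
    _ ≤ ‖y‖ ^ 2 * ∑ l, ‖y‖ ^ 2 * ∑ k, B (single k 1) (single l 1) ^ 2 := by
        gcongr with l
        exact sq_linearMap_apply_le (B.flip _) y
    _ = _ := by rw [← Finset.mul_sum, Finset.sum_comm]; ring

end EuclideanSpace

theorem csInf_image_le_csInf_image_add {α : Type*} {f g : α → ℝ} {Y : Set α}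
    (hY : Y.Nonempty) (hf : BddBelow (f '' Y)) {D : ℝ} (hfg : ∀ y ∈ Y, f y ≤ g y + D) :
    sInf (f '' Y) ≤ sInf (g '' Y) + D := by
  rw [← sub_le_iff_le_add]
  refine le_csInf (hY.image g) ?_
  rintro _ ⟨y, hy, rfl⟩
  have := csInf_le hf ⟨y, hy, rfl⟩
  linarith [hfg y hy]

theorem abs_csInf_image_sub_csInf_image_le {α : Type*} {f g : α → ℝ} {Y : Set α}
    (hY : Y.Nonempty) (hf : BddBelow (f '' Y)) (hg : BddBelow (g '' Y)) {D : ℝ}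
    (hfg : ∀ y ∈ Y, |f y - g y| ≤ D) :
    |sInf (f '' Y) - sInf (g '' Y)| ≤ D := by
  rw [abs_sub_le_iff]
  constructor
  · linarith [csInf_image_le_csInf_image_add (g := g) (D := D) hY hf fun y hy =>
      by linarith [(abs_le.mp (hfg y hy)).2]]
  · linarith [csInf_image_le_csInf_image_add (g := f) (D := D) hY hg fun y hy =>
      by linarith [(abs_le.mp (hfg y hy)).1]]

theorem sq_norm_sub_apply_sq_sub_le {H : Type*} [NormedAddCommGroup H]
    [InnerProductSpace ℝ H] {ι : Type*} [Fintype ι] [DecidableEq ι]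
    (T₁ T₂ : EuclideanSpace ℝ ι →L[ℝ] H) (x : H)
    {y : EuclideanSpace ℝ ι} (hy : ‖y‖ ≤ 1) :
    (‖x - T₁ y‖ ^ 2 - ‖x - T₂ y‖ ^ 2) ^ 2 ≤
      8 * ∑ k, (⟪x, T₁ (EuclideanSpace.single k 1)⟫ - ⟪x, T₂ (EuclideanSpace.single k 1)⟫) ^ 2 +
      2 * ∑ k, ∑ l,
        (⟪T₁ (EuclideanSpace.single k 1), T₁ (EuclideanSpace.single l 1)⟫ -
          ⟪T₂ (EuclideanSpace.single k 1), T₂ (EuclideanSpace.single l 1)⟫) ^ 2 := by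
  set φ := innerₗ H x ∘ₗ (T₁ - T₂).toLinearMap
  set B := (innerₗ H).compl₁₂ T₁.toLinearMap T₁.toLinearMap -
    (innerₗ H).compl₁₂ T₂.toLinearMap T₂.toLinearMap
  have hφ (z) : φ z = ⟪x, T₁ z⟫ - ⟪x, T₂ z⟫ := by simp [φ, inner_sub_right]
  have hB (z w) : B z w = ⟪T₁ z, T₁ w⟫ - ⟪T₂ z, T₂ w⟫ := by simp [B]
  have hlin : (⟪x, T₁ y⟫ - ⟪x, T₂ y⟫) ^ 2 ≤
      ∑ k, (⟪x, T₁ (EuclideanSpace.single k 1)⟫ -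
        ⟪x, T₂ (EuclideanSpace.single k 1)⟫) ^ 2 := by
    simpa only [hφ] using (EuclideanSpace.sq_linearMap_apply_le φ y).trans
      (mul_le_of_le_one_left (by positivity) (pow_le_one₀ (norm_nonneg y) hy))
  have hquad : (⟪T₁ y, T₁ y⟫ - ⟪T₂ y, T₂ y⟫) ^ 2 ≤
      ∑ k, ∑ l, (⟪T₁ (EuclideanSpace.single k 1), T₁ (EuclideanSpace.single l 1)⟫ -
          ⟪T₂ (EuclideanSpace.single k 1), T₂ (EuclideanSpace.single l 1)⟫) ^ 2 := by
    simpa only [hB] using (EuclideanSpace.sq_bilin_apply_self_le B y).trans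
      (mul_le_of_le_one_left (by positivity) (pow_le_one₀ (norm_nonneg y) hy))
  rw [norm_sub_sq_real, norm_sub_sq_real, ← real_inner_self_eq_norm_sq (T₁ y),
    ← real_inner_self_eq_norm_sq (T₂ y)]
  nlinarith [sq_nonneg (2 * (⟪x, T₁ y⟫ - ⟪x, T₂ y⟫) + (⟪T₁ y, T₁ y⟫ - ⟪T₂ y, T₂ y⟫))]

theorem stmt18_general {H : Type*} [NormedAddCommGroup H] [InnerProductSpace ℝ H]
    {K : ℕ}
    {Y : Set (EuclideanSpace ℝ (Fin K))} (hYne : Y.Nonempty)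
    (hYb : ∀ y ∈ Y, ‖y‖ ≤ 1)
    (T₁ T₂ : EuclideanSpace ℝ (Fin K) →L[ℝ] H)
    (x : H) :
    (sInf ((fun y => ‖x - T₁ y‖ ^ 2) '' Y) - sInf ((fun y => ‖x - T₂ y‖ ^ 2) '' Y)) ^ 2 ≤
      8 * ∑ k, (⟪x, T₁ (EuclideanSpace.single k 1)⟫ - ⟪x, T₂ (EuclideanSpace.single k 1)⟫) ^ 2 +
      2 * ∑ k, ∑ l,
        (⟪T₁ (EuclideanSpace.single k 1), T₁ (EuclideanSpace.single l 1)⟫ -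
          ⟪T₂ (EuclideanSpace.single k 1), T₂ (EuclideanSpace.single l 1)⟫) ^ 2 := by
  have hbdd (T : EuclideanSpace ℝ (Fin K) →L[ℝ] H) :
      BddBelow ((fun y => ‖x - T y‖ ^ 2) '' Y) :=
    ⟨0, by rintro _ ⟨y, -, rfl⟩; positivity⟩
  have hinf := abs_csInf_image_sub_csInf_image_le hYne (hbdd T₁) (hbdd T₂)
    fun y hy => Real.abs_le_sqrt (sq_norm_sub_apply_sq_sub_le T₁ T₂ x (hYb y hy))
  exact (Real.sq_le (by positivity)).2 (abs_le.1 hinf)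

theorem stmt18 {H : Type*} [NormedAddCommGroup H] [InnerProductSpace ℝ H]
    {K : ℕ} (hK : 1 ≤ K)
    {Y : Set (EuclideanSpace ℝ (Fin K))} (hYne : Y.Nonempty) (hYcl : IsClosed Y)
    (hYb : ∀ y ∈ Y, ‖y‖ ≤ 1)
    (T₁ T₂ : EuclideanSpace ℝ (Fin K) →L[ℝ] H)
    (x : H) (hx : ‖x‖ ≤ 1) :
    (sInf ((fun y => ‖x - T₁ y‖ ^ 2) '' Y) - sInf ((fun y => ‖x - T₂ y‖ ^ 2) '' Y)) ^ 2 ≤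
      8 * ∑ k, (⟪x, T₁ (EuclideanSpace.single k 1)⟫ - ⟪x, T₂ (EuclideanSpace.single k 1)⟫) ^ 2 +
      2 * ∑ k, ∑ l,
        (⟪T₁ (EuclideanSpace.single k 1), T₁ (EuclideanSpace.single l 1)⟫ -
          ⟪T₂ (EuclideanSpace.single k 1), T₂ (EuclideanSpace.single l 1)⟫) ^ 2 :=
  stmt18_general hYne hYb T₁ T₂ x
end

section
/- Let Y be a nonempty closed subset of the unit ball of ℝ^K, let L ≥ 1, let T₁, T₂ : ℝ^K → H be bounded linear maps with ‖T₁‖_Y ≤ L and ‖T₂‖_Y ≤ L, and let x ∈ H with ‖x‖ ≤ 1. Then | inf_{y ∈ Y} ‖x − T₁ y‖² − inf_{y ∈ Y} ‖x − T₂ y‖² | ≤ (2 + 2L) · ‖T₁ − T₂‖_Y. -/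
theorem stmt19 {H : Type*} [NormedAddCommGroup H] [InnerProductSpace ℝ H]
    {K : ℕ} (hK : 1 ≤ K)
    {Y : Set (EuclideanSpace ℝ (Fin K))} (hYne : Y.Nonempty) (hYcl : IsClosed Y)
    (hYb : ∀ y ∈ Y, ‖y‖ ≤ 1)
    {L : ℝ} (hL : 1 ≤ L)
    (T₁ T₂ : EuclideanSpace ℝ (Fin K) →L[ℝ] H)
    (hT₁ : sSup ((fun y => ‖T₁ y‖) '' Y) ≤ L) (hT₂ : sSup ((fun y => ‖T₂ y‖) '' Y) ≤ L)
    (x : H) (hx : ‖x‖ ≤ 1) :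
    |sInf ((fun y => ‖x - T₁ y‖ ^ 2) '' Y) - sInf ((fun y => ‖x - T₂ y‖ ^ 2) '' Y)| ≤
      (2 + 2 * L) * sSup ((fun y => ‖(T₁ - T₂) y‖) '' Y) := by
  set S := sSup ((fun y => ‖(T₁ - T₂) y‖) '' Y) with hSdef
  -- boundedness facts
  have bdd : ∀ T : EuclideanSpace ℝ (Fin K) →L[ℝ] H,
      BddAbove ((fun y => ‖T y‖) '' Y) := by
    intro T
    refine ⟨‖T‖, ?_⟩
    rintro _ ⟨y, hy, rfl⟩
    calc ‖T y‖ ≤ ‖T‖ * ‖y‖ := T.le_opNorm y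
      _ ≤ ‖T‖ * 1 := by
          exact mul_le_mul_of_nonneg_left (hYb y hy) (norm_nonneg T)
      _ = ‖T‖ := mul_one _
  have hS : ∀ y ∈ Y, ‖(T₁ - T₂) y‖ ≤ S :=
    fun y hy => le_csSup (bdd _) ⟨y, hy, rfl⟩
  have hSnn : 0 ≤ S := le_trans (norm_nonneg _) (hS _ hYne.choose_spec)
  have hT₁' : ∀ y ∈ Y, ‖T₁ y‖ ≤ L :=
    fun y hy => le_trans (le_csSup (bdd T₁) ⟨y, hy, rfl⟩) hT₁
  have hT₂' : ∀ y ∈ Y, ‖T₂ y‖ ≤ L :=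
    fun y hy => le_trans (le_csSup (bdd T₂) ⟨y, hy, rfl⟩) hT₂
  -- pointwise bound
  have key : ∀ y ∈ Y, |‖x - T₁ y‖ ^ 2 - ‖x - T₂ y‖ ^ 2| ≤ (2 + 2 * L) * S := by
    intro y hy
    have ha : ‖x - T₁ y‖ ≤ 1 + L :=
      le_trans (norm_sub_le _ _) (add_le_add hx (hT₁' y hy))
    have hb : ‖x - T₂ y‖ ≤ 1 + L :=
      le_trans (norm_sub_le _ _) (add_le_add hx (hT₂' y hy))
    have hab : |‖x - T₁ y‖ - ‖x - T₂ y‖| ≤ S := by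
      refine le_trans (abs_norm_sub_norm_le _ _) ?_
      have : x - T₁ y - (x - T₂ y) = -((T₁ - T₂) y) := by
        simp [ContinuousLinearMap.sub_apply]
      rw [this, norm_neg]
      exact hS y hy
    have : ‖x - T₁ y‖ ^ 2 - ‖x - T₂ y‖ ^ 2 =
        (‖x - T₁ y‖ - ‖x - T₂ y‖) * (‖x - T₁ y‖ + ‖x - T₂ y‖) := by ring
    rw [this, abs_mul]
    have hsum : |‖x - T₁ y‖ + ‖x - T₂ y‖| ≤ 2 + 2 * L := by
      rw [abs_of_nonneg (by positivity)]
      linarith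
    calc |‖x - T₁ y‖ - ‖x - T₂ y‖| * |‖x - T₁ y‖ + ‖x - T₂ y‖|
        ≤ S * (2 + 2 * L) := by
          exact mul_le_mul hab hsum (abs_nonneg _) hSnn
      _ = (2 + 2 * L) * S := by ring
  -- lower-bdd and nonempty facts for infs
  have bddb : ∀ T : EuclideanSpace ℝ (Fin K) →L[ℝ] H,
      BddBelow ((fun y => ‖x - T y‖ ^ 2) '' Y) := by
    intro T
    refine ⟨0, ?_⟩
    rintro _ ⟨y, hy, rfl⟩
    positivity
  have ne₁ : ((fun y => ‖x - T₁ y‖ ^ 2) '' Y).Nonempty := hYne.image _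
  have ne₂ : ((fun y => ‖x - T₂ y‖ ^ 2) '' Y).Nonempty := hYne.image _
  -- both directions
  have main : ∀ (U V : EuclideanSpace ℝ (Fin K) →L[ℝ] H),
      (∀ y ∈ Y, ‖x - U y‖ ^ 2 ≤ ‖x - V y‖ ^ 2 + (2 + 2 * L) * S) →
      sInf ((fun y => ‖x - U y‖ ^ 2) '' Y) ≤
        sInf ((fun y => ‖x - V y‖ ^ 2) '' Y) + (2 + 2 * L) * S := by
    intro U V h
    rw [← sub_le_iff_le_add]
    refine le_csInf (hYne.image _) ?_
    rintro _ ⟨y, hy, rfl⟩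
    rw [sub_le_iff_le_add]
    exact le_trans (csInf_le (bddb U) ⟨y, hy, rfl⟩) (h y hy)
  have h12 := main T₁ T₂ (fun y hy => by
    have := key y hy; rw [abs_le] at this; linarith [this.2])
  have h21 := main T₂ T₁ (fun y hy => by
    have := key y hy; rw [abs_le] at this; linarith [this.1])
  rw [abs_le]
  constructor <;> linarith
end
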